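/- arXiv:1810.10971 — 9 statements merged into one kernel-verified Lean document; each statement's English description precedes it below -/
import Mathlib

section
/- Let (E m)_{m ∈ ℕ} be a family of real normed vector spaces, let λ ≥ 0 be a real number, and let t be a dependent function with t m ∈ E m such that both (‖t m‖²)_{m ∈ ℕ} and (λ^{2m} ‖t m‖²)_{m ∈ ℕ} are summable. Then ∑'_{m} ‖λ^m • (t m) − t m‖² ≤ |∑'_{m} λ^{2m} ‖t m‖² − ∑'_{m} ‖t m‖²|. (Lemma A.1: ‖δ_λ t − t‖² ≤ |‖δ_λ t‖² − ‖t‖²| for the dilation δ_λ.) -/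
/-- Lemma A.1: for the dilation `δ_λ t = (λ^m • t m)_m`,
`‖δ_λ t − t‖² ≤ |‖δ_λ t‖² − ‖t‖²|`. -/
theorem stmt_1 {E : ℕ → Type*} [∀ m, NormedAddCommGroup (E m)] [∀ m, NormedSpace ℝ (E m)]
    (lam : ℝ) (hlam : 0 ≤ lam) (t : ∀ m, E m)
    (h1 : Summable fun m => ‖t m‖ ^ 2)
    (h2 : Summable fun m => lam ^ (2 * m) * ‖t m‖ ^ 2) :
    ∑' m, ‖lam ^ m • t m - t m‖ ^ 2 ≤
      |(∑' m, lam ^ (2 * m) * ‖t m‖ ^ 2) - ∑' m, ‖t m‖ ^ 2| := by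
  have hpow : ∀ m, lam ^ (2 * m) = (lam ^ m) ^ 2 := fun m => by
    rw [mul_comm, pow_mul]
  have key : ∀ m, ‖lam ^ m • t m - t m‖ ^ 2 = (lam ^ m - 1) ^ 2 * ‖t m‖ ^ 2 := by
    intro m
    have h : lam ^ m • t m - t m = (lam ^ m - 1) • t m := by rw [sub_smul, one_smul]
    rw [h, norm_smul, mul_pow, Real.norm_eq_abs, sq_abs]
  have hf : Summable fun m => ‖lam ^ m • t m - t m‖ ^ 2 := by
    refine Summable.of_nonneg_of_le (fun m => by positivity) (fun m => ?_)
      ((h2.add h1).mul_left 2)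
    rw [key m, hpow m]
    nlinarith [sq_nonneg (lam ^ m + 1), sq_nonneg (‖t m‖),
      mul_nonneg (sq_nonneg (lam ^ m + 1)) (sq_nonneg (‖t m‖))]
  rcases le_or_gt lam 1 with hl | hl
  · have hterm : ∀ m, lam ^ (2 * m) * ‖t m‖ ^ 2 ≤ ‖t m‖ ^ 2 := fun m => by
      have h := pow_le_one₀ hlam hl (n := 2 * m)
      nlinarith [sq_nonneg (‖t m‖)]
    have hle : (∑' m, lam ^ (2 * m) * ‖t m‖ ^ 2) - ∑' m, ‖t m‖ ^ 2 ≤ 0 := by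
      have := Summable.tsum_le_tsum hterm h2 h1
      linarith
    rw [abs_of_nonpos hle, neg_sub, ← Summable.tsum_sub h1 h2]
    refine Summable.tsum_le_tsum (fun m => ?_) hf (h1.sub h2)
    rw [key m, hpow m]
    have hm : lam ^ m ≤ 1 := pow_le_one₀ hlam hl
    have hm0 : 0 ≤ lam ^ m := pow_nonneg hlam m
    nlinarith [sq_nonneg (‖t m‖), mul_nonneg (mul_nonneg hm0 (sub_nonneg.2 hm)) (sq_nonneg (‖t m‖))]
  · have hterm : ∀ m, ‖t m‖ ^ 2 ≤ lam ^ (2 * m) * ‖t m‖ ^ 2 := fun m => by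
      have h := one_le_pow₀ hl.le (n := 2 * m)
      nlinarith [sq_nonneg (‖t m‖)]
    have hle : 0 ≤ (∑' m, lam ^ (2 * m) * ‖t m‖ ^ 2) - ∑' m, ‖t m‖ ^ 2 := by
      have := Summable.tsum_le_tsum hterm h1 h2
      linarith
    rw [abs_of_nonneg hle, ← Summable.tsum_sub h2 h1]
    refine Summable.tsum_le_tsum (fun m => ?_) hf (h2.sub h1)
    rw [key m, hpow m]
    have hm : 1 ≤ lam ^ m := one_le_pow₀ hl.le
    nlinarith [sq_nonneg (‖t m‖), mul_nonneg (mul_nonneg (pow_nonneg hlam m) (sub_nonneg.2 hm)) (sq_nonneg (‖t m‖))]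
end

section
/- Suppose ψ : ℝ → ℝ satisfies ψ(1) = 1, ψ(x) ≥ 1 for all x ≥ 1, and ψ is injective on [1,∞). Let λ be a normalizing function for ψ on T₁ and let Λ(t) := δ_{λ(t)} t. Then for every t ∈ T₁ the element Λ(t) again lies in T₁ with ‖Λ(t)‖² = ψ(‖t‖) (in particular, if ψ is bounded above by C on [1,∞), Λ maps T₁ into the closed ball of radius C^{1/2}), and the map Λ : T₁ → T₁ is injective. (Proposition A.2, items (i) and (ii).) -/
open scoped ENNReal

section Aux

variable {E : ℕ → Type*} [∀ m, NormedAddCommGroup (E m)] [∀ m, NormedSpace ℝ (E m)]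

private theorem aux_hasSum_norm_sq (t : lp E 2) :
    HasSum (fun m => ‖t m‖ ^ 2) (‖t‖ ^ 2) := by
  have h := lp.hasSum_norm (p := 2) (by norm_num) t
  have h2 : (2 : ℝ≥0∞).toReal = ((2 : ℕ) : ℝ) := by norm_num
  rw [h2] at h
  simpa [Real.rpow_natCast] using h

private theorem aux_norm_zero (e0 : E 0 ≃ₗᵢ[ℝ] ℝ) (t : lp E 2) (ht : e0 (t 0) = 1) :
    ‖t 0‖ = 1 := by
  have := e0.norm_map (t 0)
  rw [ht] at this
  simpa using this.symm

private theorem aux_one_le_norm (e0 : E 0 ≃ₗᵢ[ℝ] ℝ) (t : lp E 2) (ht : e0 (t 0) = 1) :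
    1 ≤ ‖t‖ := by
  have h := lp.norm_apply_le_norm (E := E) (p := 2) two_ne_zero t 0
  rwa [aux_norm_zero e0 t ht] at h

private theorem aux_hasSum_sq (e0 : E 0 ≃ₗᵢ[ℝ] ℝ) (ψ : ℝ → ℝ) (lam : lp E 2 → ℝ)
    (hlam0 : ∀ t : lp E 2, e0 (t 0) = 1 → 0 ≤ lam t)
    (hlam : ∀ t : lp E 2, e0 (t 0) = 1 →
      HasSum (fun m => lam t ^ (2 * m) * ‖t m‖ ^ 2) (ψ ‖t‖))
    (t : lp E 2) (ht : e0 (t 0) = 1) :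
    HasSum (fun m => ‖lam t ^ m • t m‖ ^ 2) (ψ ‖t‖) := by
  have h := hlam t ht
  have he : (fun m => ‖lam t ^ m • t m‖ ^ 2) = fun m => lam t ^ (2 * m) * ‖t m‖ ^ 2 := by
    funext m
    rw [norm_smul, Real.norm_eq_abs, abs_of_nonneg (pow_nonneg (hlam0 t ht) m), mul_pow,
      ← pow_mul, mul_comm m 2]
  rw [he]
  exact h

/-- If the normalizing constant is zero, the element is trivial: norm 1 and zero tail. -/
private theorem aux_lam_zero (e0 : E 0 ≃ₗᵢ[ℝ] ℝ)
    (ψ : ℝ → ℝ) (hψ1 : ψ 1 = 1) (hψinj : Set.InjOn ψ (Set.Ici 1))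
    (lam : lp E 2 → ℝ)
    (hlam0 : ∀ t : lp E 2, e0 (t 0) = 1 → 0 ≤ lam t)
    (hlam : ∀ t : lp E 2, e0 (t 0) = 1 →
      HasSum (fun m => lam t ^ (2 * m) * ‖t m‖ ^ 2) (ψ ‖t‖))
    (t : lp E 2) (ht : e0 (t 0) = 1) (h0 : lam t = 0) :
    ∀ m, m ≠ 0 → t m = 0 := by
  have hs := aux_hasSum_sq e0 ψ lam hlam0 hlam t ht
  have hzero : ∀ m, m ≠ 0 → ‖lam t ^ m • t m‖ ^ 2 = 0 := by
    intro m hm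
    rw [h0, zero_pow hm, zero_smul, norm_zero]
    ring
  have hsingle : HasSum (fun m => ‖lam t ^ m • t m‖ ^ 2) (‖lam t ^ 0 • t 0‖ ^ 2) :=
    hasSum_single 0 hzero
  have hψt : ψ ‖t‖ = 1 := by
    have := hs.unique hsingle
    rw [this, pow_zero, one_smul, aux_norm_zero e0 t ht]
    norm_num
  have hnt : ‖t‖ = 1 := hψinj (Set.mem_Ici.2 (aux_one_le_norm e0 t ht))
    (Set.mem_Ici.2 le_rfl) (by rw [hψt, hψ1])
  intro m hm
  have hsum := aux_hasSum_norm_sq t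
  rw [hnt, one_pow] at hsum
  have hle : ∑ i ∈ ({0, m} : Finset ℕ), ‖t i‖ ^ 2 ≤ 1 := by
    rw [← hsum.tsum_eq]
    exact Summable.sum_le_tsum _ (fun i _ => by positivity) hsum.summable
  rw [Finset.sum_pair (Ne.symm hm), aux_norm_zero e0 t ht] at hle
  have : ‖t m‖ ^ 2 ≤ 0 := by nlinarith
  have : ‖t m‖ = 0 := by nlinarith [norm_nonneg (t m), sq_nonneg ‖t m‖]
  exact norm_eq_zero.1 this

private theorem aux_inj (e0 : E 0 ≃ₗᵢ[ℝ] ℝ)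
    (ψ : ℝ → ℝ) (hψ1 : ψ 1 = 1) (hψinj : Set.InjOn ψ (Set.Ici 1))
    (lam : lp E 2 → ℝ)
    (hlam0 : ∀ t : lp E 2, e0 (t 0) = 1 → 0 ≤ lam t)
    (hlam : ∀ t : lp E 2, e0 (t 0) = 1 →
      HasSum (fun m => lam t ^ (2 * m) * ‖t m‖ ^ 2) (ψ ‖t‖))
    (s t : lp E 2) (hs : e0 (s 0) = 1) (ht : e0 (t 0) = 1)
    (h : ∀ m, lam s ^ m • s m = lam t ^ m • t m)
    (hab : lam s ≤ lam t) : ∀ m, s m = t m := by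
  have hs2 := aux_hasSum_sq e0 ψ lam hlam0 hlam s hs
  have ht2 := aux_hasSum_sq e0 ψ lam hlam0 hlam t ht
  have hψeq : ψ ‖s‖ = ψ ‖t‖ := by
    refine hs2.unique ?_
    have : (fun m => ‖lam s ^ m • s m‖ ^ 2) = fun m => ‖lam t ^ m • t m‖ ^ 2 := by
      funext m; rw [h m]
    rw [this]
    exact ht2
  have hnorm : ‖s‖ = ‖t‖ := hψinj (Set.mem_Ici.2 (aux_one_le_norm e0 s hs))
    (Set.mem_Ici.2 (aux_one_le_norm e0 t ht)) hψeq
  rcases eq_or_lt_of_le (hlam0 t ht) with hb0 | hbpos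
  · -- lam t = 0, hence lam s = 0
    have ha0 : lam s = 0 := le_antisymm (hab.trans hb0.ge) (hlam0 s hs)
    intro m
    rcases Nat.eq_zero_or_pos m with hm | hm
    · subst hm
      have := h 0
      simpa using this
    · rw [aux_lam_zero e0 ψ hψ1 hψinj lam hlam0 hlam s hs ha0 m hm.ne',
        aux_lam_zero e0 ψ hψ1 hψinj lam hlam0 hlam t ht hb0.symm m hm.ne']
  · -- lam t > 0
    -- pointwise ‖t m‖ ≤ ‖s m‖
    have hns : ∀ m, ‖t m‖ ≤ ‖s m‖ := by
      intro m
      have hb : (0:ℝ) < lam t ^ m := pow_pos hbpos m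
      have heq : lam s ^ m * ‖s m‖ = lam t ^ m * ‖t m‖ := by
        have := congrArg norm (h m)
        rwa [norm_smul, norm_smul, Real.norm_eq_abs, Real.norm_eq_abs,
          abs_of_nonneg (pow_nonneg (hlam0 s hs) m),
          abs_of_nonneg (pow_nonneg (hlam0 t ht) m)] at this
      have hpow : lam s ^ m ≤ lam t ^ m := pow_le_pow_left₀ (hlam0 s hs) hab m
      nlinarith [norm_nonneg (s m), norm_nonneg (t m)]
    -- sums of squares equal
    have hss := aux_hasSum_norm_sq s
    have hts := aux_hasSum_norm_sq t
    have hsumeq : (∑' m, ‖t m‖ ^ 2) = ∑' m, ‖s m‖ ^ 2 := by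
      rw [hts.tsum_eq, hss.tsum_eq, hnorm]
    have hpt : ∀ m, ‖s m‖ = ‖t m‖ := by
      intro m
      by_contra hne
      have hlt : ‖t m‖ ^ 2 < ‖s m‖ ^ 2 := by
        have h1 : ‖t m‖ < ‖s m‖ := lt_of_le_of_ne (hns m) (Ne.symm hne)
        nlinarith [norm_nonneg (t m)]
      have := Summable.tsum_lt_tsum_of_nonneg (f := fun b => ‖t b‖ ^ 2) (g := fun b => ‖s b‖ ^ 2)
        (fun b => by positivity)
        (fun b => by
          show ‖t b‖ ^ 2 ≤ ‖s b‖ ^ 2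
          nlinarith [hns b, norm_nonneg (t b), norm_nonneg (s b)]) hlt hss.summable
      rw [hsumeq] at this
      exact lt_irrefl _ this
    intro m
    rcases eq_or_ne (t m) 0 with h0 | h0
    · rw [h0]
      have := hpt m
      rw [h0, norm_zero, norm_eq_zero] at this
      exact this
    · have heq : lam s ^ m * ‖s m‖ = lam t ^ m * ‖t m‖ := by
        have := congrArg norm (h m)
        rwa [norm_smul, norm_smul, Real.norm_eq_abs, Real.norm_eq_abs,
          abs_of_nonneg (pow_nonneg (hlam0 s hs) m),
          abs_of_nonneg (pow_nonneg (hlam0 t ht) m)] at this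
      have hpoweq : lam s ^ m = lam t ^ m := by
        have hn0 : ‖t m‖ ≠ 0 := fun hc => h0 (norm_eq_zero.1 hc)
        rw [hpt m] at heq
        exact mul_right_cancel₀ hn0 heq
      have hb : (0:ℝ) < lam t ^ m := pow_pos hbpos m
      have := h m
      rw [hpoweq] at this
      exact smul_right_injective (E m) hb.ne' this

end Aux

/-- Proposition A.2, items (i) and (ii): if `ψ(1) = 1`, `ψ ≥ 1` on `[1,∞)`, and
`ψ` is injective on `[1,∞)`, then the tensor normalization `Λ(t) = δ_{λ(t)} t`
(where `λ(t) ≥ 0` satisfies `‖δ_{λ(t)} t‖² = ψ(‖t‖)`) maps `T₁` to `T₁` with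
`‖Λ(t)‖² = ψ(‖t‖)` (in particular into a ball of radius `C^{1/2}` if `ψ ≤ C`
on `[1,∞)`), and `Λ` is injective on `T₁`. Here `T₁` is the set of `t` in the
ℓ²-tensor space `lp E 2` (with `E 0 ≅ ℝ` via `e0`) with zeroth component `1`. -/
theorem stmt_2 {E : ℕ → Type*} [∀ m, NormedAddCommGroup (E m)] [∀ m, NormedSpace ℝ (E m)]
    (e0 : E 0 ≃ₗᵢ[ℝ] ℝ)
    (ψ : ℝ → ℝ) (hψ1 : ψ 1 = 1) (hψge : ∀ x, 1 ≤ x → 1 ≤ ψ x)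
    (hψinj : Set.InjOn ψ (Set.Ici 1))
    (lam : lp E 2 → ℝ)
    (hlam0 : ∀ t : lp E 2, e0 (t 0) = 1 → 0 ≤ lam t)
    (hlam : ∀ t : lp E 2, e0 (t 0) = 1 →
      HasSum (fun m => lam t ^ (2 * m) * ‖t m‖ ^ 2) (ψ ‖t‖)) :
    (∀ t : lp E 2, e0 (t 0) = 1 →
      Memℓp (fun m => lam t ^ m • t m) 2 ∧
      e0 (lam t ^ 0 • t 0) = 1 ∧
      (∑' m, ‖lam t ^ m • t m‖ ^ 2) = ψ ‖t‖ ∧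
      (∀ C : ℝ, (∀ x, 1 ≤ x → ψ x ≤ C) →
        (∑' m, ‖lam t ^ m • t m‖ ^ 2) ≤ (Real.sqrt C) ^ 2)) ∧
    (∀ s t : lp E 2, e0 (s 0) = 1 → e0 (t 0) = 1 →
      (∀ m, lam s ^ m • s m = lam t ^ m • t m) → s = t) := by
  constructor
  · intro t ht
    have hs2 := aux_hasSum_sq e0 ψ lam hlam0 hlam t ht
    have htsum : (∑' m, ‖lam t ^ m • t m‖ ^ 2) = ψ ‖t‖ := hs2.tsum_eq
    refine ⟨?_, ?_, htsum, ?_⟩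
    · apply memℓp_gen
      have h2 : (2 : ℝ≥0∞).toReal = ((2 : ℕ) : ℝ) := by norm_num
      rw [h2]
      simpa [Real.rpow_natCast] using hs2.summable
    · rw [pow_zero, one_smul]; exact ht
    · intro C hC
      rw [htsum]
      have h1 : 1 ≤ ψ ‖t‖ := hψge _ (aux_one_le_norm e0 t ht)
      have h2 : ψ ‖t‖ ≤ C := hC _ (aux_one_le_norm e0 t ht)
      rw [Real.sq_sqrt (by linarith)]
      exact h2
  · intro s t hs ht h
    rcases le_total (lam s) (lam t) with hab | hab
    · exact lp.ext (funext (aux_inj e0 ψ hψ1 hψinj lam hlam0 hlam s t hs ht h hab))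
    · exact (lp.ext (funext (aux_inj e0 ψ hψ1 hψinj lam hlam0 hlam t s ht hs
        (fun m => (h m).symm) hab))).symm
end

section
/- Suppose ψ : ℝ → ℝ satisfies ψ(1) = 1, 1 ≤ ψ(x) ≤ x² for all x ≥ 1, ψ is bounded above by a constant C on [1,∞), and ψ is K-Lipschitz on [1,∞) for some K > 0. Let λ be a normalizing function for ψ on T₁ and Λ(t) := δ_{λ(t)} t. Then for all s, t ∈ T₁: ‖Λ(s) − Λ(t)‖ ≤ (1 + K^{1/2} + 2 C^{1/2}) · max(‖s − t‖^{1/2}, ‖s − t‖). (Proposition A.2, item (iii): the tensor normalization is 1/2-Hölder on bounded sets and Lipschitz at large distances.) -/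
open scoped NNReal ENNReal



private lemma sqrt_add_le' (x y : ℝ) (hx : 0 ≤ x) (hy : 0 ≤ y) :
    Real.sqrt (x + y) ≤ Real.sqrt x + Real.sqrt y := by
  have h : x + y ≤ (Real.sqrt x + Real.sqrt y) ^ 2 := by
    have hx' := Real.sq_sqrt hx
    have hy' := Real.sq_sqrt hy
    nlinarith [Real.sqrt_nonneg x, Real.sqrt_nonneg y]
  calc Real.sqrt (x + y) ≤ Real.sqrt ((Real.sqrt x + Real.sqrt y) ^ 2) := Real.sqrt_le_sqrt h
    _ = _ := Real.sqrt_sq (by positivity)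

private lemma summable_mul_of_sq {a b : ℕ → ℝ}
    (ha : Summable fun m => a m ^ 2) (hb : Summable fun m => b m ^ 2) :
    Summable fun m => a m * b m := by
  refine Summable.of_abs (Summable.of_nonneg_of_le (fun m => abs_nonneg _) (fun m => ?_)
    (((ha.add hb).div_const 2)))
  have := abs_mul_abs_self (a m)
  have := abs_mul_abs_self (b m)
  have h2 : 2 * |a m| * |b m| ≤ |a m| ^ 2 + |b m| ^ 2 := two_mul_le_add_sq _ _
  rw [abs_mul]
  nlinarith [sq_abs (a m), sq_abs (b m)]

/-- Cauchy–Schwarz for tsums of nonnegative sequences. -/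
private lemma tsum_cs (a b : ℕ → ℝ) (ha0 : ∀ m, 0 ≤ a m) (hb0 : ∀ m, 0 ≤ b m)
    (ha : Summable fun m => a m ^ 2) (hb : Summable fun m => b m ^ 2) :
    ∑' m, a m * b m ≤ Real.sqrt (∑' m, a m ^ 2) * Real.sqrt (∑' m, b m ^ 2) := by
  have hab := summable_mul_of_sq ha hb
  refine Summable.tsum_le_of_sum_le hab fun F => ?_
  have h1 : (∑ m ∈ F, a m * b m) ^ 2 ≤ (∑ m ∈ F, a m ^ 2) * ∑ m ∈ F, b m ^ 2 :=
    Finset.sum_mul_sq_le_sq_mul_sq F a b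
  have h2 : ∑ m ∈ F, a m ^ 2 ≤ ∑' m, a m ^ 2 := Summable.sum_le_tsum F (fun m _ => sq_nonneg _) ha
  have h3 : ∑ m ∈ F, b m ^ 2 ≤ ∑' m, b m ^ 2 := Summable.sum_le_tsum F (fun m _ => sq_nonneg _) hb
  have h4 : (0:ℝ) ≤ ∑ m ∈ F, a m * b m :=
    Finset.sum_nonneg fun m _ => mul_nonneg (ha0 m) (hb0 m)
  have h5 : (0:ℝ) ≤ ∑ m ∈ F, b m ^ 2 := Finset.sum_nonneg fun m _ => sq_nonneg _
  have h6 : (0:ℝ) ≤ ∑' m, b m ^ 2 := le_trans h5 h3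
  have h7 : (0:ℝ) ≤ ∑' m, a m ^ 2 := le_trans (Finset.sum_nonneg fun m _ => sq_nonneg _) h2
  rw [← Real.sqrt_mul h7]
  rw [Real.le_sqrt h4 (by positivity)]
  calc (∑ m ∈ F, a m * b m) ^ 2 ≤ (∑ m ∈ F, a m ^ 2) * ∑ m ∈ F, b m ^ 2 := h1
    _ ≤ (∑' m, a m ^ 2) * ∑' m, b m ^ 2 := by
        apply mul_le_mul h2 h3 h5 h7

private lemma lp_summable_sq {E : ℕ → Type*} [∀ m, NormedAddCommGroup (E m)] (f : lp E 2) :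
    Summable fun m => ‖f m‖ ^ 2 := by
  have h := (lp.memℓp f).summable (p := 2) (by norm_num)
  have : (fun m => ‖f m‖ ^ (2:ℝ≥0∞).toReal) = fun m => ‖f m‖ ^ 2 := by
    funext m
    rw [show (2:ℝ≥0∞).toReal = ((2:ℕ):ℝ) by norm_num, Real.rpow_natCast]
  rwa [this] at h

private lemma lp_norm_sq {E : ℕ → Type*} [∀ m, NormedAddCommGroup (E m)] (f : lp E 2) :
    ‖f‖ ^ 2 = ∑' m, ‖f m‖ ^ 2 := by
  have h := lp.norm_rpow_eq_tsum (p := 2) (by norm_num) f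
  have e : ∀ x : ℝ, x ^ (2:ℝ≥0∞).toReal = x ^ 2 := fun x => by
    rw [show (2:ℝ≥0∞).toReal = ((2:ℕ):ℝ) by norm_num, Real.rpow_natCast]
  rw [e] at h
  rw [h]
  exact tsum_congr fun m => e _


private lemma norm_pow_smul_sq {F : Type*} [NormedAddCommGroup F] [NormedSpace ℝ F]
    (r : ℝ) (hr : 0 ≤ r) (m : ℕ) (x : F) : ‖r ^ m • x‖ ^ 2 = r ^ (2 * m) * ‖x‖ ^ 2 := by
  rw [norm_smul, Real.norm_eq_abs, abs_of_nonneg (pow_nonneg hr m), mul_pow, ← pow_mul,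
    mul_comm m 2]

private lemma mem_dil {E : ℕ → Type*} [∀ m, NormedAddCommGroup (E m)] [∀ m, NormedSpace ℝ (E m)]
    (r : ℝ) (hr : 0 ≤ r) (f : ∀ m, E m)
    (h : Summable fun m => r ^ (2 * m) * ‖f m‖ ^ 2) :
    Memℓp (fun m => r ^ m • f m) 2 := by
  apply memℓp_gen
  have e : (fun m => ‖r ^ m • f m‖ ^ (2:ℝ≥0∞).toReal) = fun m => r ^ (2 * m) * ‖f m‖ ^ 2 := by
    funext m
    rw [show (2:ℝ≥0∞).toReal = ((2:ℕ):ℝ) by norm_num, Real.rpow_natCast,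
      norm_pow_smul_sq r hr m (f m)]
  rwa [e]

private lemma mem_smul {E : ℕ → Type*} [∀ m, NormedAddCommGroup (E m)] [∀ m, NormedSpace ℝ (E m)]
    (c : ℕ → ℝ) (f : ∀ m, E m)
    (h : Summable fun m => c m ^ 2 * ‖f m‖ ^ 2) :
    Memℓp (fun m => c m • f m) 2 := by
  apply memℓp_gen
  have e : (fun m => ‖c m • f m‖ ^ (2:ℝ≥0∞).toReal) = fun m => c m ^ 2 * ‖f m‖ ^ 2 := by
    funext m
    rw [show (2:ℝ≥0∞).toReal = ((2:ℕ):ℝ) by norm_num, Real.rpow_natCast, norm_smul, mul_pow,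
      Real.norm_eq_abs, sq_abs]
  rwa [e]

private lemma le_of_sq_le_sq' {x y : ℝ} (hx : 0 ≤ x) (hy : 0 ≤ y) (h : x ^ 2 ≤ y ^ 2) :
    x ≤ y := by nlinarith

private lemma sqrt_le_self' {y : ℝ} (h : 1 ≤ y) : Real.sqrt y ≤ y := by
  calc Real.sqrt y ≤ Real.sqrt (y ^ 2) := Real.sqrt_le_sqrt (by nlinarith)
    _ = y := Real.sqrt_sq (by linarith)

/-- If the normalizing constant exceeds 1, all higher components vanish. -/
private lemma deg_case {E : ℕ → Type*} [∀ m, NormedAddCommGroup (E m)] [∀ m, NormedSpace ℝ (E m)]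
    (ψ : ℝ → ℝ) (hψle : ∀ x, 1 ≤ x → ψ x ≤ x ^ 2)
    (u : lp E 2) (c : ℝ) (hc : 1 < c) (hu : 1 ≤ ‖u‖)
    (hS : HasSum (fun m => c ^ (2 * m) * ‖u m‖ ^ 2) (ψ ‖u‖)) :
    ∀ m, m ≠ 0 → u m = 0 := by
  intro m hm
  by_contra hne
  have hsum := lp_summable_sq u
  have hSsum := hS.summable
  have hd : Summable fun k => c ^ (2 * k) * ‖u k‖ ^ 2 - ‖u k‖ ^ 2 := hSsum.sub hsum
  have hpos : 0 < ∑' k, (c ^ (2 * k) * ‖u k‖ ^ 2 - ‖u k‖ ^ 2) := by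
    refine Summable.tsum_pos hd (fun k => ?_) m ?_
    · have h1 : 1 ≤ c ^ (2 * k) := one_le_pow₀ hc.le
      nlinarith [sq_nonneg ‖u k‖]
    · have h1 : 1 < c ^ (2 * m) := one_lt_pow₀ hc (by omega)
      have h2 : 0 < ‖u m‖ ^ 2 := by
        have := norm_pos_iff.mpr hne
        positivity
      nlinarith
  have heq : ∑' k, (c ^ (2 * k) * ‖u k‖ ^ 2 - ‖u k‖ ^ 2) = ψ ‖u‖ - ‖u‖ ^ 2 := by
    rw [Summable.tsum_sub hSsum hsum, hS.tsum_eq, ← lp_norm_sq]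
  have hle : ψ ‖u‖ ≤ ‖u‖ ^ 2 := hψle _ hu
  rw [heq] at hpos
  linarith

set_option maxHeartbeats 2000000 in
private lemma key {E : ℕ → Type*} [∀ m, NormedAddCommGroup (E m)] [∀ m, NormedSpace ℝ (E m)]
    (e0 : E 0 ≃ₗᵢ[ℝ] ℝ)
    (ψ : ℝ → ℝ) (hψ1 : ψ 1 = 1)
    (hψle : ∀ x, 1 ≤ x → ψ x ≤ x ^ 2)
    (C : ℝ) (hψC : ∀ x, 1 ≤ x → ψ x ≤ C)
    (K : ℝ) (hK : 0 < K)
    (hψK : ∀ x y, 1 ≤ x → 1 ≤ y → |ψ x - ψ y| ≤ K * |x - y|)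
    (s t : lp E 2) (hs : e0 (s 0) = 1) (ht : e0 (t 0) = 1)
    (a b : ℝ) (ha0 : 0 ≤ a) (hb0 : 0 ≤ b) (hba : b ≤ a)
    (hSa : HasSum (fun m => a ^ (2 * m) * ‖s m‖ ^ 2) (ψ ‖s‖))
    (hSb : HasSum (fun m => b ^ (2 * m) * ‖t m‖ ^ 2) (ψ ‖t‖)) :
    Real.sqrt (∑' m, ‖a ^ m • s m - b ^ m • t m‖ ^ 2) ≤
      (1 + Real.sqrt K + 2 * Real.sqrt C) * max (Real.sqrt ‖s - t‖) ‖s - t‖ := by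
  have hpow : ∀ (r : ℝ) (m : ℕ), r ^ (2 * m) = (r ^ m) ^ 2 := fun r m => by
    rw [mul_comm, pow_mul]
  -- basic norm facts
  have hs0 : ‖s 0‖ = 1 := by
    have h := e0.norm_map (s 0); rw [hs] at h; simpa using h.symm
  have ht0 : ‖t 0‖ = 1 := by
    have h := e0.norm_map (t 0); rw [ht] at h; simpa using h.symm
  have h1s : 1 ≤ ‖s‖ := by
    have h2 : 1 ≤ ‖s‖ ^ 2 := by
      rw [lp_norm_sq]
      calc (1:ℝ) = ‖s 0‖ ^ 2 := by rw [hs0]; norm_num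
        _ ≤ ∑' m, ‖s m‖ ^ 2 := Summable.le_tsum (lp_summable_sq s) 0 (fun j _ => sq_nonneg _)
    nlinarith [norm_nonneg s]
  have h1t : 1 ≤ ‖t‖ := by
    have h2 : 1 ≤ ‖t‖ ^ 2 := by
      rw [lp_norm_sq]
      calc (1:ℝ) = ‖t 0‖ ^ 2 := by rw [ht0]; norm_num
        _ ≤ ∑' m, ‖t m‖ ^ 2 := Summable.le_tsum (lp_summable_sq t) 0 (fun j _ => sq_nonneg _)
    nlinarith [norm_nonneg t]
  have hC1 : (1:ℝ) ≤ C := by have := hψC 1 le_rfl; rw [hψ1] at this; exact this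
  have hRHS0 : 0 ≤ (1 + Real.sqrt K + 2 * Real.sqrt C) * max (Real.sqrt ‖s - t‖) ‖s - t‖ := by
    apply mul_nonneg (by positivity)
    exact le_trans (Real.sqrt_nonneg _) (le_max_left _ _)
  rcases le_or_gt b 1 with hb1 | hb1
  -- MAIN CASE : b ≤ 1
  · set d : ℝ := ‖s - t‖ with hd
    have hd0 : 0 ≤ d := norm_nonneg _
    have hst : ∀ m, (s - t : lp E 2) m = s m - t m := fun m => by
      rw [lp.coeFn_sub]; rfl
    have hsumst : Summable fun m => ‖s m - t m‖ ^ 2 := by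
      have h := lp_summable_sq (s - t)
      simpa only [hst] using h
    have hd2 : d ^ 2 = ∑' m, ‖s m - t m‖ ^ 2 := by
      rw [hd, lp_norm_sq]
      exact tsum_congr fun m => by rw [hst]
    -- the two pieces
    have hsumw1 : Summable fun m => (b ^ m) ^ 2 * ‖s m - t m‖ ^ 2 := by
      refine Summable.of_nonneg_of_le (fun m => by positivity) (fun m => ?_) hsumst
      have hb2 : (b ^ m) ^ 2 ≤ 1 := by
        have : b ^ m ≤ 1 := pow_le_one₀ hb0 hb1
        nlinarith [pow_nonneg hb0 m]
      nlinarith [sq_nonneg ‖s m - t m‖]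
    have hsumw2 : Summable fun m => (a ^ m - b ^ m) ^ 2 * ‖s m‖ ^ 2 := by
      refine Summable.of_nonneg_of_le (fun m => by positivity) (fun m => ?_) hSa.summable
      have h1 : 0 ≤ a ^ m - b ^ m := sub_nonneg.mpr (pow_le_pow_left₀ hb0 hba m)
      have h2 : (a ^ m - b ^ m) ^ 2 ≤ a ^ (2 * m) := by
        rw [hpow]
        have : a ^ m - b ^ m ≤ a ^ m := by
          have := pow_nonneg hb0 m; linarith
        nlinarith
      nlinarith [sq_nonneg ‖s m‖]
    set w1 : lp E 2 := ⟨fun m => b ^ m • (s m - t m), mem_smul _ _ hsumw1⟩ with hw1def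
    set w2 : lp E 2 := ⟨fun m => (a ^ m - b ^ m) • s m, mem_smul _ _ hsumw2⟩ with hw2def
    have hw1coe : ∀ m, w1 m = b ^ m • (s m - t m) := fun m => rfl
    have hw2coe : ∀ m, w2 m = (a ^ m - b ^ m) • s m := fun m => rfl
    have hpt : ∀ m, a ^ m • s m - b ^ m • t m = (w1 + w2 : lp E 2) m := by
      intro m
      have h := lp.coeFn_add w1 w2
      have : (w1 + w2 : lp E 2) m = w1 m + w2 m := by rw [h]; rfl
      rw [this, hw1coe, hw2coe, smul_sub, sub_smul]
      abel
    -- LHS = ‖w1 + w2‖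
    have hLHS : Real.sqrt (∑' m, ‖a ^ m • s m - b ^ m • t m‖ ^ 2) = ‖(w1 + w2 : lp E 2)‖ := by
      rw [show (∑' m, ‖a ^ m • s m - b ^ m • t m‖ ^ 2)
          = ∑' m, ‖(w1 + w2 : lp E 2) m‖ ^ 2 from tsum_congr fun m => by rw [hpt],
        ← lp_norm_sq, Real.sqrt_sq (norm_nonneg _)]
    -- bound on w1
    have hnw1 : ‖w1‖ ≤ d := by
      refine le_of_sq_le_sq' (norm_nonneg _) hd0 ?_
      rw [lp_norm_sq, hd2]
      refine Summable.tsum_le_tsum (fun m => ?_) (lp_summable_sq w1) hsumst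
      rw [hw1coe, norm_smul, Real.norm_eq_abs, abs_of_nonneg (pow_nonneg hb0 m), mul_pow]
      have hb2 : (b ^ m) ^ 2 ≤ 1 := by
        have : b ^ m ≤ 1 := pow_le_one₀ hb0 hb1
        nlinarith [pow_nonneg hb0 m]
      nlinarith [sq_nonneg ‖s m - t m‖]
    -- X and its bounds
    set X : ℝ := ∑' m, b ^ (2 * m) * ‖s m‖ ^ 2 with hX
    have hXsum : Summable fun m => b ^ (2 * m) * ‖s m‖ ^ 2 := by
      refine Summable.of_nonneg_of_le (fun m => by positivity) (fun m => ?_) hSa.summable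
      exact mul_le_mul_of_nonneg_right (pow_le_pow_left₀ hb0 hba _) (sq_nonneg _)
    have hX0 : 0 ≤ X := tsum_nonneg fun m => by positivity
    have hXC : X ≤ C := by
      have h1 : X ≤ ψ ‖s‖ := by
        rw [← hSa.tsum_eq]
        exact Summable.tsum_le_tsum (fun m =>
          mul_le_mul_of_nonneg_right (pow_le_pow_left₀ hb0 hba _) (sq_nonneg _))
          hXsum hSa.summable
      exact h1.trans (hψC _ h1s)
    -- ‖w2‖² ≤ ψ‖s‖ - X
    have hw2sq : ‖w2‖ ^ 2 ≤ ψ ‖s‖ - X := by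
      rw [lp_norm_sq]
      have h1 : ∑' m, ‖w2 m‖ ^ 2 ≤ ∑' m, (a ^ (2 * m) * ‖s m‖ ^ 2 - b ^ (2 * m) * ‖s m‖ ^ 2) := by
        refine Summable.tsum_le_tsum (fun m => ?_) ?_ (hSa.summable.sub hXsum)
        · rw [hw2coe, norm_smul, Real.norm_eq_abs, mul_pow, sq_abs, hpow a, hpow b]
          have hba' : b ^ m ≤ a ^ m := pow_le_pow_left₀ hb0 hba m
          have hbm : 0 ≤ b ^ m := pow_nonneg hb0 m
          nlinarith [sq_nonneg ‖s m‖, mul_nonneg (mul_nonneg hbm (sub_nonneg.mpr hba'))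
            (sq_nonneg ‖s m‖)]
        · have := lp_summable_sq w2
          simpa only [hw2coe, norm_smul, Real.norm_eq_abs, mul_pow, sq_abs] using this
      rw [Summable.tsum_sub hSa.summable hXsum, hSa.tsum_eq] at h1
      exact h1
    -- ψ‖s‖ - ψ‖t‖ ≤ K d
    have hψst : ψ ‖s‖ - ψ ‖t‖ ≤ K * d := by
      have h1 := hψK ‖s‖ ‖t‖ h1s h1t
      have h2 : |‖s‖ - ‖t‖| ≤ d := abs_norm_sub_norm_le s t
      have h3 : K * |‖s‖ - ‖t‖| ≤ K * d := mul_le_mul_of_nonneg_left h2 hK.le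
      have h4 := le_abs_self (ψ ‖s‖ - ψ ‖t‖)
      linarith
    -- ψ‖t‖ - X ≤ 2 √C d  via Cauchy–Schwarz
    have hψtX : ψ ‖t‖ - X ≤ 2 * Real.sqrt C * d := by
      have hq1 : Summable fun m => (b ^ m * ‖t m‖) ^ 2 := by
        have := hSb.summable
        refine this.congr fun m => ?_
        rw [mul_pow, hpow]
      have hq2 : Summable fun m => (b ^ m * ‖s m - t m‖) ^ 2 := by
        refine hsumw1.congr fun m => ?_
        rw [mul_pow]
      have hq3 : Summable fun m => (b ^ m * ‖s m‖) ^ 2 := by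
        refine hXsum.congr fun m => ?_
        rw [mul_pow, hpow]
      have hYle : Real.sqrt (∑' m, (b ^ m * ‖s m - t m‖) ^ 2) ≤ d := by
        refine le_of_sq_le_sq' (Real.sqrt_nonneg _) hd0 ?_
        rw [Real.sq_sqrt (tsum_nonneg fun m => sq_nonneg _), hd2]
        refine Summable.tsum_le_tsum (fun m => ?_) hq2 hsumst
        rw [mul_pow]
        have hb2 : (b ^ m) ^ 2 ≤ 1 := by
          have : b ^ m ≤ 1 := pow_le_one₀ hb0 hb1
          nlinarith [pow_nonneg hb0 m]
        nlinarith [sq_nonneg ‖s m - t m‖]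
      have ht_eq : ∑' m, (b ^ m * ‖t m‖) ^ 2 = ψ ‖t‖ := by
        rw [← hSb.tsum_eq]
        exact tsum_congr fun m => by rw [mul_pow, hpow]
      have hs_eq : ∑' m, (b ^ m * ‖s m‖) ^ 2 = X := by
        rw [hX]
        exact tsum_congr fun m => by rw [mul_pow, hpow]
      have hcs1 := tsum_cs (fun m => b ^ m * ‖t m‖) (fun m => b ^ m * ‖s m - t m‖)
        (fun m => by positivity) (fun m => by positivity) hq1 hq2
      have hcs2 := tsum_cs (fun m => b ^ m * ‖s m‖) (fun m => b ^ m * ‖s m - t m‖)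
        (fun m => by positivity) (fun m => by positivity) hq3 hq2
      rw [ht_eq] at hcs1
      rw [hs_eq] at hcs2
      have hsqψt : Real.sqrt (ψ ‖t‖) ≤ Real.sqrt C := Real.sqrt_le_sqrt (hψC _ h1t)
      have hsqX : Real.sqrt X ≤ Real.sqrt C := Real.sqrt_le_sqrt hXC
      -- pointwise comparison
      have hterm : ∀ m, b ^ (2 * m) * ‖t m‖ ^ 2 - b ^ (2 * m) * ‖s m‖ ^ 2 ≤
          (b ^ m * ‖t m‖) * (b ^ m * ‖s m - t m‖) + (b ^ m * ‖s m‖) * (b ^ m * ‖s m - t m‖) := by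
        intro m
        have h1 : ‖t m‖ - ‖s m‖ ≤ ‖s m - t m‖ := by
          rw [norm_sub_rev]; exact norm_sub_norm_le _ _
        have h2 : ‖t m‖ ^ 2 - ‖s m‖ ^ 2 ≤ (‖t m‖ + ‖s m‖) * ‖s m - t m‖ := by
          nlinarith [norm_nonneg (t m), norm_nonneg (s m)]
        have h3 := mul_le_mul_of_nonneg_left h2 (sq_nonneg (b ^ m))
        calc b ^ (2 * m) * ‖t m‖ ^ 2 - b ^ (2 * m) * ‖s m‖ ^ 2
            = (b ^ m) ^ 2 * (‖t m‖ ^ 2 - ‖s m‖ ^ 2) := by rw [hpow]; ring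
          _ ≤ (b ^ m) ^ 2 * ((‖t m‖ + ‖s m‖) * ‖s m - t m‖) := h3
          _ = (b ^ m * ‖t m‖) * (b ^ m * ‖s m - t m‖)
              + (b ^ m * ‖s m‖) * (b ^ m * ‖s m - t m‖) := by ring
      have hsum1 : Summable fun m => (b ^ m * ‖t m‖) * (b ^ m * ‖s m - t m‖) :=
        summable_mul_of_sq hq1 hq2
      have hsum2 : Summable fun m => (b ^ m * ‖s m‖) * (b ^ m * ‖s m - t m‖) :=
        summable_mul_of_sq hq3 hq2
      have hchain : ψ ‖t‖ - X ≤
          ∑' m, ((b ^ m * ‖t m‖) * (b ^ m * ‖s m - t m‖)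
            + (b ^ m * ‖s m‖) * (b ^ m * ‖s m - t m‖)) := by
        rw [← hSb.tsum_eq, hX, ← Summable.tsum_sub hSb.summable hXsum]
        exact Summable.tsum_le_tsum hterm (hSb.summable.sub hXsum) (hsum1.add hsum2)
      rw [Summable.tsum_add hsum1 hsum2] at hchain
      have hfin : ψ ‖t‖ - X ≤ Real.sqrt C * d + Real.sqrt C * d := by
        have e1 : ∑' m, (b ^ m * ‖t m‖) * (b ^ m * ‖s m - t m‖) ≤ Real.sqrt C * d := by
          calc _ ≤ Real.sqrt (ψ ‖t‖) * Real.sqrt (∑' m, (b ^ m * ‖s m - t m‖) ^ 2) := hcs1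
            _ ≤ Real.sqrt C * d :=
              mul_le_mul hsqψt hYle (Real.sqrt_nonneg _) (Real.sqrt_nonneg _)
        have e2 : ∑' m, (b ^ m * ‖s m‖) * (b ^ m * ‖s m - t m‖) ≤ Real.sqrt C * d := by
          calc _ ≤ Real.sqrt X * Real.sqrt (∑' m, (b ^ m * ‖s m - t m‖) ^ 2) := hcs2
            _ ≤ Real.sqrt C * d :=
              mul_le_mul hsqX hYle (Real.sqrt_nonneg _) (Real.sqrt_nonneg _)
        linarith
      linarith
    -- assemble bound on ‖w2‖
    have hw2n : ‖w2‖ ≤ Real.sqrt K * Real.sqrt d + 2 * Real.sqrt C * Real.sqrt d := by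
      have h1 : ‖w2‖ ^ 2 ≤ K * d + 2 * Real.sqrt C * d := by
        have : ψ ‖s‖ - X = (ψ ‖s‖ - ψ ‖t‖) + (ψ ‖t‖ - X) := by ring
        linarith [hw2sq]
      have h2 : ‖w2‖ ≤ Real.sqrt (K * d + 2 * Real.sqrt C * d) := by
        refine le_of_sq_le_sq' (norm_nonneg _) (Real.sqrt_nonneg _) ?_
        rw [Real.sq_sqrt (by positivity)]
        exact h1
      have h3 : Real.sqrt (K * d + 2 * Real.sqrt C * d) ≤
          Real.sqrt (K * d) + Real.sqrt (2 * Real.sqrt C * d) := by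
        exact sqrt_add_le' _ _ (by positivity) (by positivity)
      have h4 : Real.sqrt (K * d) = Real.sqrt K * Real.sqrt d := Real.sqrt_mul hK.le d
      have h5 : Real.sqrt (2 * Real.sqrt C * d) ≤ 2 * Real.sqrt C * Real.sqrt d := by
        rw [Real.sqrt_mul (by positivity) d]
        have h6 : Real.sqrt (2 * Real.sqrt C) ≤ 2 * Real.sqrt C := by
          apply sqrt_le_self'
          have : (1:ℝ) ≤ Real.sqrt C := Real.one_le_sqrt.mpr hC1
          linarith
        exact mul_le_mul_of_nonneg_right h6 (Real.sqrt_nonneg d)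
      linarith
    -- final assembly
    rw [hLHS]
    have htri : ‖(w1 + w2 : lp E 2)‖ ≤ ‖w1‖ + ‖w2‖ := norm_add_le _ _
    set M : ℝ := max (Real.sqrt d) d with hM
    have hdM : d ≤ M := le_max_right _ _
    have hsdM : Real.sqrt d ≤ M := le_max_left _ _
    have hsK : Real.sqrt K * Real.sqrt d ≤ Real.sqrt K * M :=
      mul_le_mul_of_nonneg_left hsdM (Real.sqrt_nonneg K)
    have hsC : 2 * Real.sqrt C * Real.sqrt d ≤ 2 * Real.sqrt C * M :=
      mul_le_mul_of_nonneg_left hsdM (by positivity)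
    calc ‖(w1 + w2 : lp E 2)‖ ≤ ‖w1‖ + ‖w2‖ := htri
      _ ≤ d + (Real.sqrt K * Real.sqrt d + 2 * Real.sqrt C * Real.sqrt d) := by linarith
      _ ≤ M + (Real.sqrt K * M + 2 * Real.sqrt C * M) := by linarith
      _ = (1 + Real.sqrt K + 2 * Real.sqrt C) * M := by ring
  -- DEGENERATE CASE : 1 < b ≤ a
  · have ha1 : 1 < a := lt_of_lt_of_le hb1 hba
    have hdegs := deg_case ψ hψle s a ha1 h1s hSa
    have hdegt := deg_case ψ hψle t b hb1 h1t hSb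
    have h00 : s 0 = t 0 := e0.injective (hs.trans ht.symm)
    have hzero : ∀ m, ‖a ^ m • s m - b ^ m • t m‖ ^ 2 = 0 := by
      intro m
      cases m with
      | zero => simp [h00]
      | succ n =>
        rw [hdegs _ (Nat.succ_ne_zero n), hdegt _ (Nat.succ_ne_zero n)]
        simp
    rw [tsum_congr hzero, tsum_zero, Real.sqrt_zero]
    exact hRHS0

/-- Proposition A.2, item (iii): if `ψ(1) = 1`, `1 ≤ ψ(x) ≤ x²` on `[1,∞)`,
`ψ ≤ C` on `[1,∞)` and `ψ` is `K`-Lipschitz on `[1,∞)` with `K > 0`, then the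
tensor normalization `Λ(t) = δ_{λ(t)} t` satisfies
`‖Λ(s) − Λ(t)‖ ≤ (1 + K^{1/2} + 2 C^{1/2}) · max(‖s − t‖^{1/2}, ‖s − t‖)`
for all `s, t ∈ T₁`. -/
theorem stmt_3 {E : ℕ → Type*} [∀ m, NormedAddCommGroup (E m)] [∀ m, NormedSpace ℝ (E m)]
    (e0 : E 0 ≃ₗᵢ[ℝ] ℝ)
    (ψ : ℝ → ℝ) (hψ1 : ψ 1 = 1) (hψge : ∀ x, 1 ≤ x → 1 ≤ ψ x)
    (hψle : ∀ x, 1 ≤ x → ψ x ≤ x ^ 2)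
    (C : ℝ) (hψC : ∀ x, 1 ≤ x → ψ x ≤ C)
    (K : ℝ) (hK : 0 < K)
    (hψK : ∀ x y, 1 ≤ x → 1 ≤ y → |ψ x - ψ y| ≤ K * |x - y|)
    (lam : lp E 2 → ℝ)
    (hlam0 : ∀ t : lp E 2, e0 (t 0) = 1 → 0 ≤ lam t)
    (hlam : ∀ t : lp E 2, e0 (t 0) = 1 →
      HasSum (fun m => lam t ^ (2 * m) * ‖t m‖ ^ 2) (ψ ‖t‖)) :
    ∀ s t : lp E 2, e0 (s 0) = 1 → e0 (t 0) = 1 →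
      Real.sqrt (∑' m, ‖lam s ^ m • s m - lam t ^ m • t m‖ ^ 2) ≤
        (1 + Real.sqrt K + 2 * Real.sqrt C) * max (Real.sqrt ‖s - t‖) ‖s - t‖ := by
  intro s t hs ht
  rcases le_total (lam t) (lam s) with h | h
  · exact key e0 ψ hψ1 hψle C hψC K hK hψK s t hs ht (lam s) (lam t)
      (hlam0 s hs) (hlam0 t ht) h (hlam s hs) (hlam t ht)
  · have hkey := key e0 ψ hψ1 hψle C hψC K hK hψK t s ht hs (lam t) (lam s)
      (hlam0 t ht) (hlam0 s hs) h (hlam t ht) (hlam s hs)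
    have e1 : (∑' m, ‖lam s ^ m • s m - lam t ^ m • t m‖ ^ 2)
        = ∑' m, ‖lam t ^ m • t m - lam s ^ m • s m‖ ^ 2 :=
      tsum_congr fun m => by rw [norm_sub_rev]
    have e2 : ‖s - t‖ = ‖t - s‖ := norm_sub_rev s t
    rw [e1, e2]
    exact hkey
end

section
/- Let (E m)_{m ∈ ℕ} be a family of real normed vector spaces with E 0 = ℝ, and let t ∈ T₁ (so t 0 = 1 and (‖t m‖²)_m is summable) be such that t m₀ ≠ 0 for some m₀ ≥ 1. Then for every real number c with 1 ≤ c ≤ ∑'_m ‖t m‖², there exists a unique λ ∈ [0,1] such that ∑'_m λ^{2m} ‖t m‖² = c. (The existence and uniqueness of the normalizing constant λ(t) defined by ‖δ_{λ(t)} t‖² = ψ(‖t‖), which underpins Corollary A.3 on the existence of tensor normalizations, taking c = ψ(‖t‖) ∈ [1, ‖t‖²].) -/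
/-!
Put `a m = ‖t m‖²`. On `[0, 1]` the power series `f x = ∑ a m x^m` converges uniformly, so it
is continuous, and it is strictly increasing because the coefficient `a m₀` with `m₀ ≥ 1` is
positive. Since `f 0 = a 0 = 1` and `f 1 = ∑ a m = ‖t‖²`, the intermediate value theorem and
strict monotonicity give a unique `x ∈ [0, 1]` with `f x = c`; the sought constant is `λ = √x`,
i.e. we apply the same argument to `λ ↦ f (λ²) = ∑ λ^{2m} ‖t m‖²`.
-/

open Set

theorem StrictMonoOn.existsUnique_eq_of_mem_Icc {f : ℝ → ℝ} {a b c : ℝ} (hab : a ≤ b)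
    (hcont : ContinuousOn f (Icc a b)) (hmono : StrictMonoOn f (Icc a b))
    (hc : c ∈ Icc (f a) (f b)) : ∃! x, x ∈ Icc a b ∧ f x = c := by
  obtain ⟨x, hx, hfx⟩ := intermediate_value_Icc hab hcont hc
  exact ⟨x, ⟨hx, hfx⟩, fun y ⟨hy, hfy⟩ => hmono.injOn hy hx (hfy.trans hfx.symm)⟩

section PowerSeriesOnUnitInterval

variable {a : ℕ → ℝ}

theorem tsum_zero_pow_mul : ∑' m, (0 : ℝ) ^ m * a m = a 0 := by
  rw [tsum_eq_single 0 fun m hm => by simp [hm]]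
  simp

variable (ha : ∀ m, 0 ≤ a m) (hs : Summable a)
include ha

theorem pow_mul_le_of_mem_Icc {x : ℝ} (hx : x ∈ Icc (0 : ℝ) 1) (m : ℕ) :
    x ^ m * a m ≤ a m :=
  mul_le_of_le_one_left (ha m) (pow_le_one₀ hx.1 hx.2)

include hs

theorem summable_pow_mul_of_mem_Icc {x : ℝ} (hx : x ∈ Icc (0 : ℝ) 1) :
    Summable fun m => x ^ m * a m :=
  hs.of_nonneg_of_le (fun m => mul_nonneg (pow_nonneg hx.1 m) (ha m))
    (pow_mul_le_of_mem_Icc ha hx)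

theorem continuousOn_tsum_pow_mul : ContinuousOn (fun x => ∑' m, x ^ m * a m) (Icc 0 1) := by
  refine continuousOn_tsum (fun m => by fun_prop) hs fun m x hx => ?_
  rw [Real.norm_of_nonneg (mul_nonneg (pow_nonneg hx.1 m) (ha m))]
  exact pow_mul_le_of_mem_Icc ha hx m

theorem strictMonoOn_tsum_pow_mul {m₀ : ℕ} (hm₀ : m₀ ≠ 0) (hpos : 0 < a m₀) :
    StrictMonoOn (fun x => ∑' m, x ^ m * a m) (Icc 0 1) := by
  intro x hx y hy hxy
  refine Summable.tsum_lt_tsum (i := m₀) (fun m => ?_) ?_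
    (summable_pow_mul_of_mem_Icc ha hs hx) (summable_pow_mul_of_mem_Icc ha hs hy)
  · exact mul_le_mul_of_nonneg_right (pow_le_pow_left₀ hx.1 hxy.le m) (ha m)
  · exact mul_lt_mul_of_pos_right (pow_lt_pow_left₀ hxy hx.1 hm₀) hpos

end PowerSeriesOnUnitInterval

/-- Existence and uniqueness of the normalizing constant (underpinning
Corollary A.3): for `t ∈ T₁` with some nonzero level `m₀ ≥ 1` and any
`c ∈ [1, ‖t‖²] = [1, ∑ ‖t m‖²]`, there is a unique `λ ∈ [0,1]` with
`∑ λ^{2m} ‖t m‖² = c`. -/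
theorem stmt_4 {E : ℕ → Type*} [∀ m, NormedAddCommGroup (E m)] [∀ m, NormedSpace ℝ (E m)]
    (e0 : E 0 ≃ₗᵢ[ℝ] ℝ) (t : lp E 2) (ht0 : e0 (t 0) = 1)
    (m₀ : ℕ) (hm₀ : 1 ≤ m₀) (htm : t m₀ ≠ 0)
    (c : ℝ) (hc1 : 1 ≤ c) (hc2 : c ≤ ∑' m, ‖t m‖ ^ 2) :
    ∃! lam : ℝ, lam ∈ Set.Icc (0 : ℝ) 1 ∧ (∑' m, lam ^ (2 * m) * ‖t m‖ ^ 2) = c := by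
  set f : ℝ → ℝ := fun x => ∑' m, x ^ m * ‖t m‖ ^ 2
  have ha : ∀ m, 0 ≤ ‖t m‖ ^ 2 := fun m => sq_nonneg _
  have hs : Summable fun m => ‖t m‖ ^ 2 := by
    simpa using (lp.memℓp t).summable (p := 2) (by norm_num)
  have hnorm0 : ‖t 0‖ = 1 := by rw [← e0.norm_map, ht0, norm_one]
  have hsq : MapsTo (fun l : ℝ => l ^ 2) (Icc 0 1) (Icc 0 1) :=
    fun l hl => ⟨sq_nonneg l, pow_le_one₀ hl.1 hl.2⟩
  have hsq_mono : StrictMonoOn (fun l : ℝ => l ^ 2) (Icc 0 1) :=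
    (pow_left_strictMonoOn₀ two_ne_zero).mono fun _ hl => hl.1
  have hf_mono : StrictMonoOn f (Icc 0 1) :=
    strictMonoOn_tsum_pow_mul ha hs (m₀ := m₀) (by omega) (pow_pos (norm_pos_iff.2 htm) 2)
  simp_rw [pow_mul]
  refine StrictMonoOn.existsUnique_eq_of_mem_Icc (f := f ∘ fun l => l ^ 2) zero_le_one
    ((continuousOn_tsum_pow_mul ha hs).comp (continuousOn_pow 2) hsq)
    (hf_mono.comp hsq_mono hsq) ?_
  simpa [f, tsum_zero_pow_mul, hnorm0] using And.intro hc1 hc2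
end

section
/- Assume additionally that ψ is K-Lipschitz on [1,∞) for some K > 0. Then the normalized moment map Φ : ℝ^d → lp (fun m => EuclideanSpace ℝ (Fin m → Fin d)) 2, Φ(x) = ((λ(x)^m ∏_{j : Fin m} x(i j))/m!)_{m, i}, is well defined (each Φ(x) is square-summable), injective, continuous, and satisfies ‖Φ(x)‖² = ψ(‖φ(x)‖) ≤ C for every x; in particular Φ is a continuous injection of ℝ^d into a bounded subset of the feature space. (Proposition 4.1, item (1).) -/
/-!
Writing `G t = ∑ tᵐ / (m!)²`, the moment map satisfies `⟪φ v, φ w⟫ = G ⟪v, w⟫`, and the normalized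
map is `Φ x = φ (λ x • x)`. Continuity of this kernel makes `φ` continuous, and the first level
of `φ v` is `v` itself, so `φ` is injective. The normalization reads `G ‖λ x • x‖² = ψ ‖φ x‖`;
since `t ↦ G t²` is strictly increasing on `[0, ∞)` and `ψ` is continuous and injective on
`[1, ∞) ∋ ‖φ x‖`, the length `‖λ x • x‖` depends continuously on `x` and determines `‖x‖`.
Hence `x ↦ λ x • x` is continuous and injective, and so is `Φ`.
-/

open Filter Topology

noncomputable def momentSeries (t : ℝ) : ℝ := ∑' m : ℕ, t ^ m / (m.factorial : ℝ) ^ 2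

theorem summable_pow_div_factorial_sq (t : ℝ) :
    Summable fun m : ℕ => t ^ m / (m.factorial : ℝ) ^ 2 := by
  refine .of_norm_bounded (Real.summable_pow_div_factorial |t|) fun m => ?_
  have hm : (1 : ℝ) ≤ m.factorial := by exact_mod_cast m.factorial_pos
  rw [norm_div, norm_pow, norm_pow, Real.norm_eq_abs, Real.norm_natCast]
  exact div_le_div_of_nonneg_left (by positivity) (by positivity) (le_self_pow₀ hm two_ne_zero)

theorem continuous_momentSeries : Continuous momentSeries := by
  refine continuous_iff_continuousAt.2 fun t => ?_
  have hball : ContinuousOn momentSeries (Metric.ball 0 (|t| + 1)) := by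
    refine continuousOn_tsum (fun m => by fun_prop) (summable_pow_div_factorial_sq (|t| + 1))
      fun m s hs => ?_
    rw [mem_ball_zero_iff, Real.norm_eq_abs] at hs
    rw [norm_div, norm_pow, norm_pow, Real.norm_eq_abs, Real.norm_natCast]
    gcongr
  exact hball.continuousAt (Metric.isOpen_ball.mem_nhds (by simp))

theorem strictMonoOn_momentSeries : StrictMonoOn momentSeries (Set.Ici 0) := by
  intro s (hs : 0 ≤ s) t _ hst
  exact Summable.tsum_lt_tsum_of_nonneg (i := 1) (fun m => by positivity) (fun m => by gcongr)
    (by simpa) (summable_pow_div_factorial_sq t)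

theorem one_le_momentSeries {t : ℝ} (ht : 0 ≤ t) : 1 ≤ momentSeries t := by
  simpa [momentSeries] using (summable_pow_div_factorial_sq t).le_tsum 0 fun m _ => by positivity

theorem momentSeries_sq (t : ℝ) :
    momentSeries (t ^ 2) = ∑' m : ℕ, t ^ (2 * m) / (m.factorial : ℝ) ^ 2 := by
  simp only [momentSeries, pow_mul]

theorem strictMonoOn_momentSeries_sq : StrictMonoOn (fun t => momentSeries (t ^ 2)) (Set.Ici 0) :=
  fun s hs t _ hst => strictMonoOn_momentSeries (sq_nonneg s) (sq_nonneg t)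
    (pow_lt_pow_left₀ hst hs two_ne_zero)

theorem tendsto_of_tendsto_comp_of_strictMonoOn {α : Type*} {l : Filter α} {F : ℝ → ℝ}
    (hF : StrictMonoOn F (Set.Ici 0)) {u : α → ℝ} {u₀ : ℝ} (hu : ∀ a, 0 ≤ u a) (hu₀ : 0 ≤ u₀)
    (h : Tendsto (fun a => F (u a)) l (𝓝 (F u₀))) : Tendsto u l (𝓝 u₀) := by
  refine tendsto_order.2 ⟨fun b hb => ?_, fun b hb => ?_⟩
  · rcases lt_or_ge b 0 with hb0 | hb0
    · exact .of_forall fun a => hb0.trans_le (hu a)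
    · filter_upwards [h.eventually (eventually_gt_nhds (hF hb0 hu₀ hb))] with a ha
      exact (hF.lt_iff_lt hb0 (hu a)).1 ha
  · have hb0 : 0 ≤ b := hu₀.trans hb.le
    filter_upwards [h.eventually (eventually_lt_nhds (hF hu₀ hb0 hb))] with a ha
    exact (hF.lt_iff_lt (hu a) hb0).1 ha

theorem continuous_of_continuous_inner {X H : Type*} [TopologicalSpace X]
    [NormedAddCommGroup H] [InnerProductSpace ℝ H] {f : X → H}
    (hf : Continuous fun p : X × X => inner ℝ (f p.1) (f p.2)) : Continuous f := by
  set k := fun p : X × X => inner ℝ (f p.1) (f p.2)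
  refine continuous_iff_continuousAt.2 fun x => tendsto_iff_norm_sub_tendsto_zero.2 ?_
  have hk : ∀ y, ‖f y - f x‖ = √(k (y, y) - k (y, x) - k (x, y) + k (x, x)) := fun y => by
    rw [norm_eq_sqrt_real_inner, inner_sub_sub_self]
  have hcont : Continuous fun y => k (y, y) - k (y, x) - k (x, y) + k (x, x) := by
    fun_prop
  simp_rw [hk]
  rw [← Real.sqrt_zero, ← show k (x, x) - k (x, x) - k (x, x) + k (x, x) = 0 by ring]
  exact (Real.continuous_sqrt.tendsto _).comp (hcont.tendsto x)

section MomentMap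

variable {ι : Type*}

noncomputable def momentLevel (v : EuclideanSpace ℝ ι) (m : ℕ) : EuclideanSpace ℝ (Fin m → ι) :=
  WithLp.toLp 2 fun i => (∏ j, v (i j)) / (m.factorial : ℝ)

theorem momentLevel_smul (c : ℝ) (v : EuclideanSpace ℝ ι) :
    momentLevel (c • v) =
      fun m => WithLp.toLp 2 fun i => c ^ m * (∏ j, v (i j)) / (m.factorial : ℝ) := by
  ext m
  simp [momentLevel, Finset.prod_mul_distrib, mul_div_assoc]

variable [Fintype ι]

theorem inner_momentLevel (v w : EuclideanSpace ℝ ι) (m : ℕ) :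
    inner ℝ (momentLevel v m) (momentLevel w m) = inner ℝ v w ^ m / (m.factorial : ℝ) ^ 2 := by
  simp only [momentLevel, PiLp.inner_apply, Fintype.sum_pow, Finset.sum_div]
  refine Fintype.sum_congr _ _ fun i => ?_
  simp only [RCLike.inner_apply, conj_trivial, Finset.prod_mul_distrib]
  ring

theorem memℓp_momentLevel (v : EuclideanSpace ℝ ι) : Memℓp (momentLevel v) 2 := by
  refine memℓp_gen ?_
  simp only [ENNReal.toReal_ofNat, Real.rpow_two, ← real_inner_self_eq_norm_sq, inner_momentLevel]
  exact summable_pow_div_factorial_sq _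

noncomputable def momentMap (v : EuclideanSpace ℝ ι) :
    lp (fun m => EuclideanSpace ℝ (Fin m → ι)) 2 :=
  ⟨momentLevel v, memℓp_momentLevel v⟩

theorem inner_momentMap (v w : EuclideanSpace ℝ ι) :
    inner ℝ (momentMap v) (momentMap w) = momentSeries (inner ℝ v w) := by
  rw [lp.inner_eq_tsum]
  exact tsum_congr fun m => inner_momentLevel v w m

theorem norm_momentMap_sq (v : EuclideanSpace ℝ ι) :
    ‖momentMap v‖ ^ 2 = momentSeries (‖v‖ ^ 2) := by
  rw [← real_inner_self_eq_norm_sq, ← real_inner_self_eq_norm_sq, inner_momentMap]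

theorem continuous_momentMap : Continuous (momentMap (ι := ι)) :=
  continuous_of_continuous_inner <| by
    simp only [inner_momentMap]
    exact continuous_momentSeries.comp (continuous_fst.inner continuous_snd)

theorem momentMap_injective : Function.Injective (momentMap (ι := ι)) := by
  intro v w h
  ext k
  simpa [momentMap, momentLevel] using congr($h 1 (fun _ => k))

end MomentMap

theorem continuous_smul_self_of_continuous_mul_norm {E : Type*} [NormedAddCommGroup E]
    [NormedSpace ℝ E] {c : E → ℝ} (hc0 : ∀ x, 0 ≤ c x) (hc : Continuous fun x => c x * ‖x‖) :
    Continuous fun x => c x • x := by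
  refine continuous_iff_continuousAt.2 fun x => ?_
  rcases eq_or_ne x 0 with rfl | hx
  · rw [ContinuousAt, smul_zero, tendsto_zero_iff_norm_tendsto_zero]
    simp only [norm_smul_of_nonneg (hc0 _)]
    simpa using hc.tendsto 0
  · have hquot : ContinuousAt (fun y => ((c y * ‖y‖) / ‖y‖) • y) x :=
      (hc.continuousAt.div continuous_norm.continuousAt (norm_ne_zero_iff.2 hx)).smul
        continuousAt_id
    refine hquot.congr ?_
    filter_upwards [eventually_ne_nhds hx] with y hy
    rw [mul_div_cancel_right₀ _ (norm_ne_zero_iff.2 hy)]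

section Normalization

variable {ι : Type*} [Fintype ι]

theorem norm_momentMap_eq_sqrt (v : EuclideanSpace ℝ ι) :
    ‖momentMap v‖ = √(momentSeries (‖v‖ ^ 2)) := by
  rw [← norm_momentMap_sq, Real.sqrt_sq (norm_nonneg _)]

theorem one_le_norm_momentMap (v : EuclideanSpace ℝ ι) : 1 ≤ ‖momentMap v‖ := by
  rw [norm_momentMap_eq_sqrt, Real.one_le_sqrt]
  exact one_le_momentSeries (sq_nonneg _)

theorem norm_eq_of_norm_momentMap_eq {v w : EuclideanSpace ℝ ι}
    (h : ‖momentMap v‖ = ‖momentMap w‖) : ‖v‖ = ‖w‖ := by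
  refine strictMonoOn_momentSeries_sq.injOn (norm_nonneg v) (norm_nonneg w) ?_
  change momentSeries (‖v‖ ^ 2) = momentSeries (‖w‖ ^ 2)
  rw [← norm_momentMap_sq, ← norm_momentMap_sq, h]

variable {ψ : ℝ → ℝ} {lam : EuclideanSpace ℝ ι → ℝ}

theorem injective_smul_of_norm_momentMap (hψ : Set.InjOn ψ (Set.Ici 1)) (hlam0 : ∀ x, 0 < lam x)
    (hlam : ∀ x, ‖momentMap (lam x • x)‖ ^ 2 = ψ ‖momentMap x‖) :
    Function.Injective fun x => lam x • x := by
  intro x y hxy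
  have hnorm : ‖x‖ = ‖y‖ := norm_eq_of_norm_momentMap_eq <|
    hψ (one_le_norm_momentMap x) (one_le_norm_momentMap y) <| by
      rw [← hlam, ← hlam]
      exact congr(‖momentMap $hxy‖ ^ 2)
  rcases eq_or_ne x 0 with rfl | hx
  · exact (norm_eq_zero.1 (hnorm.symm.trans norm_zero)).symm
  have hlam_eq : lam x = lam y := by
    have := congr(‖$hxy‖)
    simp only [norm_smul_of_nonneg (hlam0 _).le, ← hnorm] at this
    exact mul_right_cancel₀ (norm_ne_zero_iff.2 hx) this
  exact smul_right_injective _ (hlam0 y).ne' (by simpa only [hlam_eq] using hxy)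

theorem continuous_smul_of_norm_momentMap (hψ : ContinuousOn ψ (Set.Ici 1))
    (hlam0 : ∀ x, 0 < lam x) (hlam : ∀ x, ‖momentMap (lam x • x)‖ ^ 2 = ψ ‖momentMap x‖) :
    Continuous fun x => lam x • x := by
  have hψφ : Continuous fun x => ψ ‖momentMap x‖ :=
    hψ.comp_continuous (continuous_norm.comp (continuous_momentMap (ι := ι))) one_le_norm_momentMap
  refine continuous_smul_self_of_continuous_mul_norm (fun x => (hlam0 x).le) ?_
  refine continuous_iff_continuousAt.2 fun x =>
    tendsto_of_tendsto_comp_of_strictMonoOn strictMonoOn_momentSeries_sq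
      (fun y => by positivity [hlam0 y]) (by positivity [hlam0 x]) ?_
  simp only [← norm_smul_of_nonneg (hlam0 _).le, ← norm_momentMap_sq, hlam]
  exact hψφ.tendsto x

end Normalization

theorem stmt_7_general (d : ℕ)
    (ψ : ℝ → ℝ) (hψinj : Set.InjOn ψ (Set.Ici 1))
    (C : ℝ) (hψC : ∀ x, 1 ≤ x → ψ x ≤ C)
    (K : ℝ)
    (hψK : ∀ x y, 1 ≤ x → 1 ≤ y → |ψ x - ψ y| ≤ K * |x - y|)
    (lam : EuclideanSpace ℝ (Fin d) → ℝ) (hlam0 : ∀ x, 0 < lam x)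
    (hlam : ∀ x : EuclideanSpace ℝ (Fin d),
      HasSum (fun m => (lam x * ‖x‖) ^ (2 * m) / (m.factorial : ℝ) ^ 2)
        (ψ (Real.sqrt (∑' m, ‖x‖ ^ (2 * m) / (m.factorial : ℝ) ^ 2)))) :
    (∀ x : EuclideanSpace ℝ (Fin d),
      Memℓp (fun m => (WithLp.toLp 2 (fun i : Fin m → Fin d =>
        lam x ^ m * (∏ j, x (i j)) / (m.factorial : ℝ)) :
          EuclideanSpace ℝ (Fin m → Fin d))) 2) ∧
    ∃ Φ : EuclideanSpace ℝ (Fin d) → lp (fun m => EuclideanSpace ℝ (Fin m → Fin d)) 2,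
      (∀ (x : EuclideanSpace ℝ (Fin d)) (m : ℕ) (i : Fin m → Fin d),
        Φ x m i = lam x ^ m * (∏ j, x (i j)) / (m.factorial : ℝ)) ∧
      Function.Injective Φ ∧ Continuous Φ ∧
      (∀ x, ‖Φ x‖ ^ 2 = ψ (Real.sqrt (∑' m, ‖x‖ ^ (2 * m) / (m.factorial : ℝ) ^ 2)) ∧
        ‖Φ x‖ ^ 2 ≤ C) := by
  have hnorm : ∀ x, ‖momentMap (lam x • x)‖ ^ 2 = ψ ‖momentMap x‖ := fun x => by
    rw [norm_momentMap_sq, norm_smul_of_nonneg (hlam0 x).le, norm_momentMap_eq_sqrt,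
      momentSeries_sq, momentSeries_sq]
    exact (hlam x).tsum_eq
  have hψcont : ContinuousOn ψ (Set.Ici 1) :=
    LipschitzOnWith.continuousOn (K := K.toNNReal) <| .of_dist_le_mul fun x hx y hy => by
      rw [Real.dist_eq, Real.dist_eq, Real.coe_toNNReal']
      exact (hψK x y hx hy).trans (by gcongr; exact le_max_left K 0)
  refine ⟨fun x => momentLevel_smul (lam x) x ▸ memℓp_momentLevel (lam x • x),
    fun x => momentMap (lam x • x), fun x m i => by simp [momentMap, momentLevel_smul],
    momentMap_injective.comp (injective_smul_of_norm_momentMap hψinj hlam0 hnorm),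
    continuous_momentMap.comp (continuous_smul_of_norm_momentMap hψcont hlam0 hnorm),
    fun x => ?_⟩
  have hφ : ‖momentMap x‖ = √(∑' m, ‖x‖ ^ (2 * m) / (m.factorial : ℝ) ^ 2) := by
    rw [norm_momentMap_eq_sqrt, momentSeries_sq]
  rw [hnorm, ← hφ]
  exact ⟨rfl, hψC _ (one_le_norm_momentMap x)⟩

/-- Proposition 4.1, item (1): the normalized moment map
`Φ(x) = (λ(x)^m x^{⊗m}/m!)_m`, realized coordinatewise on
`lp (fun m => EuclideanSpace ℝ (Fin m → Fin d)) 2`, is well defined,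
injective, continuous, and satisfies `‖Φ(x)‖² = ψ(‖φ(x)‖) ≤ C`;
so `Φ` is a continuous injection of `ℝ^d` into a bounded set. -/
theorem stmt_7 (d : ℕ) (hd : 1 ≤ d)
    (ψ : ℝ → ℝ) (hψ1 : ψ 1 = 1) (hψge : ∀ x, 1 ≤ x → 1 ≤ ψ x)
    (hψle : ∀ x, 1 ≤ x → ψ x ≤ x ^ 2) (hψinj : Set.InjOn ψ (Set.Ici 1))
    (C : ℝ) (hψC : ∀ x, 1 ≤ x → ψ x ≤ C)
    (K : ℝ) (hK : 0 < K)
    (hψK : ∀ x y, 1 ≤ x → 1 ≤ y → |ψ x - ψ y| ≤ K * |x - y|)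
    (lam : EuclideanSpace ℝ (Fin d) → ℝ) (hlam0 : ∀ x, 0 < lam x)
    (hlam : ∀ x : EuclideanSpace ℝ (Fin d),
      HasSum (fun m => (lam x * ‖x‖) ^ (2 * m) / (m.factorial : ℝ) ^ 2)
        (ψ (Real.sqrt (∑' m, ‖x‖ ^ (2 * m) / (m.factorial : ℝ) ^ 2)))) :
    (∀ x : EuclideanSpace ℝ (Fin d),
      Memℓp (fun m => (WithLp.toLp 2 (fun i : Fin m → Fin d =>
        lam x ^ m * (∏ j, x (i j)) / (m.factorial : ℝ)) :
          EuclideanSpace ℝ (Fin m → Fin d))) 2) ∧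
    ∃ Φ : EuclideanSpace ℝ (Fin d) → lp (fun m => EuclideanSpace ℝ (Fin m → Fin d)) 2,
      (∀ (x : EuclideanSpace ℝ (Fin d)) (m : ℕ) (i : Fin m → Fin d),
        Φ x m i = lam x ^ m * (∏ j, x (i j)) / (m.factorial : ℝ)) ∧
      Function.Injective Φ ∧ Continuous Φ ∧
      (∀ x, ‖Φ x‖ ^ 2 = ψ (Real.sqrt (∑' m, ‖x‖ ^ (2 * m) / (m.factorial : ℝ) ^ 2)) ∧
        ‖Φ x‖ ^ 2 ≤ C) :=
  stmt_7_general d ψ hψinj C hψC K hψK lam hlam0 hlam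
end

section
/- Assume λ is Borel measurable. Let μ and ν be finite Borel measures on ℝ^d such that for every m ∈ ℕ and every index function i : Fin m → Fin d, ∫ λ(x)^m (∏_{j : Fin m} x(i j))/m! dμ(x) = ∫ λ(x)^m (∏_{j : Fin m} x(i j))/m! dν(x). Then μ = ν. In other words, the normalized sequence of moments (E[λ(X)^m X^{⊗m}/m!])_{m ≥ 0} characterizes finite (signed) Borel measures on ℝ^d. (Proposition 4.1, item (3): the normalized moment map is characteristic to the finite signed Borel measures on ℝ^d; equality of two finite measures here is equivalent to the vanishing of a finite signed measure.) -/
/-!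
The normalized moments of `μ` are, up to the factor `1/m!`, the ordinary mixed moments of the
pushforward of `μ` under `T x = λ(x) • x`. The `m = 1` term of the normalizing identity gives
`‖T x‖² ≤ ψ(‖φ(x)‖) ≤ C`, so both pushforwards live on a compact ball, where polynomials in the
coordinates are dense by Stone–Weierstrass; hence `μ.map T = ν.map T`. Moreover `T` is injective:
`‖T x‖` determines `∑ₘ ‖T x‖^{2m}/(m!)² = ψ(‖φ(x)‖)`, hence `‖φ(x)‖` (as `ψ` is injective), hence
`‖x‖`, hence `λ(x)`. A measurable injection of `ℝ^d` into itself is a measurable embedding, so the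
pushforward determines the measure.
-/

open MeasureTheory

namespace ContinuousMap

variable {X : Type*} [TopologicalSpace X] [CompactSpace X] [MeasurableSpace X]
  [OpensMeasurableSpace X]

noncomputable def integralCLM (μ : Measure X) [IsFiniteMeasure μ] : C(X, ℝ) →L[ℝ] ℝ :=
  LinearMap.mkContinuous
    { toFun := fun g => ∫ x, g x ∂μ
      map_add' := fun f g => integral_add ((BoundedContinuousFunction.mkOfCompact f).integrable μ)
        ((BoundedContinuousFunction.mkOfCompact g).integrable μ)
      map_smul' := fun r g => integral_smul r _ }
    (μ.real Set.univ) fun g => by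
      simpa using (BoundedContinuousFunction.mkOfCompact g).norm_integral_le_mul_norm μ

end ContinuousMap

theorem Submonoid.exists_fin_prod_eq_of_mem_closure_range {M ι : Type*} [CommMonoid M]
    {c : ι → M} {x : M} (hx : x ∈ Submonoid.closure (Set.range c)) :
    ∃ (m : ℕ) (i : Fin m → ι), ∏ j, c (i j) = x := by
  induction hx using Submonoid.closure_induction with
  | mem x hx =>
    obtain ⟨k, rfl⟩ := hx
    exact ⟨1, fun _ => k, by simp⟩
  | one => exact ⟨0, Fin.elim0, by simp⟩
  | mul x y _ _ hx hy =>
    obtain ⟨m, i, rfl⟩ := hx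
    obtain ⟨n, i', rfl⟩ := hy
    exact ⟨m + n, Fin.append i i', by simp [Fin.prod_univ_add]⟩

namespace MeasureTheory

theorem ext_of_forall_mem_closure_integral_eq_of_compactSpace {X : Type*} [TopologicalSpace X]
    [CompactSpace X] [HasOuterApproxClosed X] [MeasurableSpace X] [BorelSpace X]
    {μ ν : Measure X} [IsFiniteMeasure μ] [IsFiniteMeasure ν] {s : Set C(X, ℝ)}
    (hs : (Algebra.adjoin ℝ s).SeparatesPoints)
    (heq : ∀ g ∈ Submonoid.closure s, ∫ x, g x ∂μ = ∫ x, g x ∂ν) : μ = ν := by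
  set Iμ := ContinuousMap.integralCLM μ
  set Iν := ContinuousMap.integralCLM ν
  have hadjoin : ∀ g ∈ Algebra.adjoin ℝ s, Iμ g = Iν g := fun g hg =>
    LinearMap.eqOn_span' (f := Iμ.toLinearMap) (g := Iν.toLinearMap) heq
      (by rwa [← Algebra.adjoin_eq_span])
  have hall : ∀ g, Iμ g = Iν g := by
    intro g
    have hg : g ∈ (Algebra.adjoin ℝ s).topologicalClosure := by
      rw [ContinuousMap.subalgebra_topologicalClosure_eq_top_of_separatesPoints _ hs]
      trivial
    rw [← SetLike.mem_coe, Subalgebra.topologicalClosure_coe] at hg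
    exact closure_minimal hadjoin (isClosed_eq Iμ.continuous Iν.continuous) hg
  exact ext_of_forall_integral_eq_of_IsFiniteMeasure fun f => hall f.toContinuousMap

theorem map_eq_of_forall_integral_prod_eq {α : Type*} [MeasurableSpace α] {d : ℕ}
    {μ ν : Measure α} [IsFiniteMeasure μ] [IsFiniteMeasure ν] {T : α → EuclideanSpace ℝ (Fin d)}
    (hT : Measurable T) {R : ℝ} (hTR : ∀ x, ‖T x‖ ≤ R)
    (h : ∀ (m : ℕ) (i : Fin m → Fin d), ∫ x, ∏ j, T x (i j) ∂μ = ∫ x, ∏ j, T x (i j) ∂ν) :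
    μ.map T = ν.map T := by
  set K := Metric.closedBall (0 : EuclideanSpace ℝ (Fin d)) R
  have : CompactSpace K := isCompact_iff_compactSpace.mp (isCompact_closedBall 0 R)
  set F : α → K := fun x => ⟨T x, mem_closedBall_zero_iff.mpr (hTR x)⟩
  have hF : Measurable F := hT.subtype_mk
  set coord : Fin d → C(K, ℝ) := fun k =>
    ⟨fun y => (y : EuclideanSpace ℝ (Fin d)) k, by fun_prop⟩
  have hsep : (Algebra.adjoin ℝ (Set.range coord)).SeparatesPoints := by
    intro y y' hyy'
    obtain ⟨k, hk⟩ : ∃ k, coord k y ≠ coord k y' := by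
      by_contra! hcon
      exact hyy' (Subtype.ext (PiLp.ext hcon))
    exact ⟨coord k, ⟨coord k, Algebra.subset_adjoin ⟨k, rfl⟩, rfl⟩, hk⟩
  have hmapF : μ.map F = ν.map F := by
    refine ext_of_forall_mem_closure_integral_eq_of_compactSpace hsep fun g hg => ?_
    obtain ⟨m, i, rfl⟩ := Submonoid.exists_fin_prod_eq_of_mem_closure_range hg
    rw [integral_map hF.aemeasurable (by fun_prop), integral_map hF.aemeasurable (by fun_prop)]
    simpa [ContinuousMap.prod_apply, coord, F] using h m i
  have hT' : T = Subtype.val ∘ F := rfl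
  rw [hT', ← Measure.map_map measurable_subtype_coe hF,
    ← Measure.map_map measurable_subtype_coe hF, hmapF]

end MeasureTheory

/-- `momentSqNorm ‖x‖ = ‖φ(x)‖²` for the moment map `φ`. -/
noncomputable def momentSqNorm (t : ℝ) : ℝ :=
  ∑' m, t ^ (2 * m) / (m.factorial : ℝ) ^ 2

theorem summable_momentSqNorm (t : ℝ) :
    Summable fun m => t ^ (2 * m) / (m.factorial : ℝ) ^ 2 := by
  refine (Real.summable_pow_div_factorial (t ^ 2)).of_nonneg_of_le
    (fun m => by rw [pow_mul]; positivity) fun m => ?_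
  rw [pow_mul]
  gcongr
  exact le_self_pow₀ (Nat.one_le_cast.mpr m.factorial_pos) two_ne_zero

theorem one_le_momentSqNorm (t : ℝ) : 1 ≤ momentSqNorm t := by
  simpa [momentSqNorm] using
    (summable_momentSqNorm t).le_tsum 0 fun m _ => by rw [pow_mul]; positivity

theorem sq_le_momentSqNorm (t : ℝ) : t ^ 2 ≤ momentSqNorm t := by
  simpa [momentSqNorm] using
    (summable_momentSqNorm t).le_tsum 1 fun m _ => by rw [pow_mul]; positivity

theorem strictMonoOn_momentSqNorm : StrictMonoOn momentSqNorm (Set.Ici 0) := by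
  intro a ha b _ hab
  have hsq : a ^ 2 < b ^ 2 := pow_lt_pow_left₀ hab ha two_ne_zero
  refine (summable_momentSqNorm a).tsum_lt_tsum (i := 1) (fun m => ?_) (by simpa using hsq)
    (summable_momentSqNorm b)
  simp only [pow_mul]
  gcongr

theorem one_le_sqrt_momentSqNorm (t : ℝ) : 1 ≤ √(momentSqNorm t) :=
  Real.one_le_sqrt.mpr (one_le_momentSqNorm t)

section NormalizingFunction

variable {E : Type*} [NormedAddCommGroup E] [NormedSpace ℝ E] {lam : E → ℝ}

theorem injective_smul_self (hpos : ∀ x, 0 < lam x)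
    (hnorm : ∀ x y, lam x * ‖x‖ = lam y * ‖y‖ → ‖x‖ = ‖y‖) :
    Function.Injective fun x => lam x • x := by
  intro x y hxy
  have hnorm_smul : ∀ z, ‖lam z • z‖ = lam z * ‖z‖ := fun z => by
    rw [norm_smul, Real.norm_of_nonneg (hpos z).le]
  have hr : lam x * ‖x‖ = lam y * ‖y‖ := by
    rw [← hnorm_smul, ← hnorm_smul]
    exact congrArg norm hxy
  have hxy_norm := hnorm x y hr
  rcases eq_or_ne ‖x‖ 0 with hx | hx
  · exact (norm_eq_zero.mp hx).trans (norm_eq_zero.mp (hxy_norm.symm.trans hx)).symm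
  · rw [hxy_norm] at hr hx
    have hlam : lam x = lam y := mul_right_cancel₀ hx hr
    simp only [hlam] at hxy
    exact smul_right_injective E (hpos y).ne' hxy

variable {ψ : ℝ → ℝ}
  (hlam : ∀ x, HasSum (fun m => (lam x * ‖x‖) ^ (2 * m) / (m.factorial : ℝ) ^ 2)
    (ψ (√(momentSqNorm ‖x‖))))
include hlam

theorem norm_smul_self_le_sqrt (hpos : ∀ x, 0 < lam x) {C : ℝ} (hψC : ∀ t, 1 ≤ t → ψ t ≤ C)
    (x : E) : ‖lam x • x‖ ≤ √C := by
  rw [norm_smul, Real.norm_of_nonneg (hpos x).le]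
  refine Real.le_sqrt_of_sq_le ?_
  calc (lam x * ‖x‖) ^ 2 ≤ momentSqNorm (lam x * ‖x‖) := sq_le_momentSqNorm _
    _ = ψ (√(momentSqNorm ‖x‖)) := (hlam x).tsum_eq
    _ ≤ C := hψC _ (one_le_sqrt_momentSqNorm _)

theorem injective_smul_self_of_hasSum (hpos : ∀ x, 0 < lam x) (hψ : Set.InjOn ψ (Set.Ici 1)) :
    Function.Injective fun x => lam x • x := by
  refine injective_smul_self hpos fun x y hxy => ?_
  have hψeq : ψ (√(momentSqNorm ‖x‖)) = ψ (√(momentSqNorm ‖y‖)) := by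
    rw [← (hlam x).tsum_eq, ← (hlam y).tsum_eq, hxy]
  have hS := hψ (one_le_sqrt_momentSqNorm _) (one_le_sqrt_momentSqNorm _) hψeq
  rw [Real.sqrt_inj (zero_le_one.trans (one_le_momentSqNorm _))
    (zero_le_one.trans (one_le_momentSqNorm _))] at hS
  exact strictMonoOn_momentSqNorm.injOn (norm_nonneg x) (norm_nonneg y) hS

end NormalizingFunction

theorem EuclideanSpace.prod_smul_apply {d m : ℕ} (c : ℝ) (x : EuclideanSpace ℝ (Fin d))
    (i : Fin m → Fin d) :
    ∏ j, (c • x) (i j) = c ^ m * ∏ j, x (i j) := by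
  simp [Finset.prod_mul_distrib]

theorem stmt_8_general (d : ℕ)
    (ψ : ℝ → ℝ) (hψinj : Set.InjOn ψ (Set.Ici 1))
    (C : ℝ) (hψC : ∀ x, 1 ≤ x → ψ x ≤ C)
    (lam : EuclideanSpace ℝ (Fin d) → ℝ) (hlam0 : ∀ x, 0 < lam x)
    (hlammeas : Measurable lam)
    (hlam : ∀ x : EuclideanSpace ℝ (Fin d),
      HasSum (fun m => (lam x * ‖x‖) ^ (2 * m) / (m.factorial : ℝ) ^ 2)
        (ψ (Real.sqrt (∑' m, ‖x‖ ^ (2 * m) / (m.factorial : ℝ) ^ 2))))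
    (μ ν : Measure (EuclideanSpace ℝ (Fin d)))
    [IsFiniteMeasure μ] [IsFiniteMeasure ν]
    (h : ∀ (m : ℕ) (i : Fin m → Fin d),
      (∫ x, lam x ^ m * (∏ j, x (i j)) / (m.factorial : ℝ) ∂μ) =
        ∫ x, lam x ^ m * (∏ j, x (i j)) / (m.factorial : ℝ) ∂ν) :
    μ = ν := by
  have hT : Measurable fun x => lam x • x := hlammeas.smul measurable_id
  have hmoments : ∀ (m : ℕ) (i : Fin m → Fin d),
      ∫ x, ∏ j, (lam x • x) (i j) ∂μ = ∫ x, ∏ j, (lam x • x) (i j) ∂ν := by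
    intro m i
    have hm := h m i
    rw [integral_div, integral_div, div_left_inj' (Nat.cast_ne_zero.mpr m.factorial_ne_zero)] at hm
    simpa only [EuclideanSpace.prod_smul_apply] using hm
  have hmap := map_eq_of_forall_integral_prod_eq hT
    (norm_smul_self_le_sqrt hlam hlam0 hψC) hmoments
  have hemb := hT.measurableEmbedding (injective_smul_self_of_hasSum hlam hlam0 hψinj)
  rw [← hemb.comap_map μ, ← hemb.comap_map ν, hmap]

/-- Proposition 4.1, item (3): the normalized moments characterize finite
Borel measures on `ℝ^d`: if two finite Borel measures `μ, ν` have the same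
normalized moments `∫ λ(x)^m x^{⊗m}/m! dμ` (coordinatewise, for every level
`m` and index `i : Fin m → Fin d`), then `μ = ν`. -/
theorem stmt_8 (d : ℕ) (hd : 1 ≤ d)
    (ψ : ℝ → ℝ) (hψ1 : ψ 1 = 1) (hψge : ∀ x, 1 ≤ x → 1 ≤ ψ x)
    (hψle : ∀ x, 1 ≤ x → ψ x ≤ x ^ 2) (hψinj : Set.InjOn ψ (Set.Ici 1))
    (C : ℝ) (hψC : ∀ x, 1 ≤ x → ψ x ≤ C)
    (lam : EuclideanSpace ℝ (Fin d) → ℝ) (hlam0 : ∀ x, 0 < lam x)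
    (hlammeas : Measurable lam)
    (hlam : ∀ x : EuclideanSpace ℝ (Fin d),
      HasSum (fun m => (lam x * ‖x‖) ^ (2 * m) / (m.factorial : ℝ) ^ 2)
        (ψ (Real.sqrt (∑' m, ‖x‖ ^ (2 * m) / (m.factorial : ℝ) ^ 2))))
    (μ ν : Measure (EuclideanSpace ℝ (Fin d)))
    [IsFiniteMeasure μ] [IsFiniteMeasure ν]
    (h : ∀ (m : ℕ) (i : Fin m → Fin d),
      (∫ x, lam x ^ m * (∏ j, x (i j)) / (m.factorial : ℝ) ∂μ) =
        ∫ x, lam x ^ m * (∏ j, x (i j)) / (m.factorial : ℝ) ∂ν) :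
    μ = ν :=
  stmt_8_general d ψ hψinj C hψC lam hlam0 hlammeas hlam μ ν h
end

section
/- For every x ∈ X, the family (w(q) · exp(i ⟪v_q, x⟫))_{q ∈ Q} is square-summable, i.e. Φ(x) ∈ ℓ²(Q, ℂ) with ‖Φ(x)‖ = 1, and the map Φ : X → ℓ²(Q, ℂ) is continuous. (Claim E.1: Φ maps X continuously into the unit sphere of E = ℓ²(Q,ℂ); hence the kernel k(x,y) = ⟪Φ(x), Φ(y)⟫ is bounded and continuous.) -/
/-! Every coordinate `w q · exp(i⟪v_q, x⟫)` has modulus `|w q|` and depends continuously on `x`,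
so `w ∈ ℓ²` is a common majorant: it gives membership in `ℓ²`, the norm `(∑ w q²)^{1/2} = 1`,
and continuity of `Φ` by dominated convergence for series. -/

open Filter Topology
open scoped ENNReal

namespace lp

variable {ι : Type*} {E : ι → Type*} [∀ i, NormedAddCommGroup (E i)] {p : ℝ≥0∞}

theorem norm_eq_one_of_hasSum (hp : 0 < p.toReal) (f : lp E p)
    (hf : HasSum (fun i => ‖f i‖ ^ p.toReal) 1) : ‖f‖ = 1 := by
  rw [norm_eq_tsum_rpow hp, hf.tsum_eq, Real.one_rpow]

theorem tendsto_of_dominated_convergence [Fact (1 ≤ p)] {α : Type*} {l : Filter α} (hp : p ≠ ∞)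
    {F : α → lp E p} {f : lp E p} {c : ι → ℝ} (hc : Memℓp c p)
    (hFc : ∀ᶠ k in l, ∀ i, ‖F k i‖ ≤ c i) (hFf : ∀ i, Tendsto (fun k => F k i) l (𝓝 (f i))) :
    Tendsto F l (𝓝 f) := by
  rcases l.eq_or_neBot with rfl | _
  · exact tendsto_bot
  replace hp : 0 < p.toReal := ENNReal.toReal_pos (one_pos.trans_le Fact.out).ne' hp
  have hfc : ∀ i, ‖f i‖ ≤ c i := fun i =>
    le_of_tendsto (hFf i).norm (hFc.mono fun k hk => hk i)
  have hpow : Tendsto (fun k => ‖F k - f‖ ^ p.toReal) l (𝓝 0) := by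
    simp only [norm_rpow_eq_tsum hp, coeFn_sub, Pi.sub_apply]
    rw [← tsum_zero]
    refine tendsto_tsum_of_dominated_convergence ((hc.const_smul (2 : ℝ)).summable hp)
      (fun i => ?_) (hFc.mono fun k hk i => ?_)
    · simpa [Real.zero_rpow hp.ne'] using
        (((hFf i).sub_const (f i)).norm.rpow_const (Or.inr hp.le))
    · rw [Real.norm_of_nonneg (by positivity)]
      gcongr
      calc ‖F k i - f i‖ ≤ ‖F k i‖ + ‖f i‖ := norm_sub_le _ _
        _ ≤ ‖(2 : ℝ) • c i‖ := by
          rw [smul_eq_mul, two_mul]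
          exact (add_le_add (hk i) (hfc i)).trans (Real.le_norm_self _)
  rw [tendsto_iff_norm_sub_tendsto_zero]
  simpa [Real.rpow_rpow_inv (norm_nonneg _) hp.ne', Real.zero_rpow, hp.ne'] using
    hpow.rpow_const (p := p.toReal⁻¹) (Or.inr (by positivity))

theorem continuous_of_dominated [Fact (1 ≤ p)] {X : Type*} [TopologicalSpace X] (hp : p ≠ ∞)
    {F : X → lp E p} {c : ι → ℝ} (hc : Memℓp c p) (hFc : ∀ x i, ‖F x i‖ ≤ c i)
    (hF : ∀ i, Continuous fun x => F x i) : Continuous F :=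
  continuous_iff_continuousAt.2 fun _ =>
    tendsto_of_dominated_convergence hp hc (Eventually.of_forall (hFc ·))
      fun i => (hF i).continuousAt

end lp

theorem stmt_10_general {X : Type*} [NormedAddCommGroup X] [InnerProductSpace ℝ X] [CompleteSpace X]
    (b : HilbertBasis ℕ ℝ X)
    (w : (ℕ →₀ ℚ) → ℝ) (hw1 : HasSum (fun q => w q ^ 2) 1) :
    (∀ x : X, Memℓp (fun q : ℕ →₀ ℚ => (w q : ℂ) *
      Complex.exp (Complex.I *
        ((inner ℝ (∑ n ∈ q.support, (q n : ℝ) • b n) x : ℝ) : ℂ))) 2) ∧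
    ∃ Φ : X → lp (fun _ : ℕ →₀ ℚ => ℂ) 2,
      (∀ (x : X) (q : ℕ →₀ ℚ), Φ x q = (w q : ℂ) *
        Complex.exp (Complex.I *
          ((inner ℝ (∑ n ∈ q.support, (q n : ℝ) • b n) x : ℝ) : ℂ))) ∧
      (∀ x, ‖Φ x‖ = 1) ∧ Continuous Φ := by
  set φ : X → (ℕ →₀ ℚ) → ℂ := fun x q => (w q : ℂ) *
    Complex.exp (Complex.I * ((inner ℝ (∑ n ∈ q.support, (q n : ℝ) • b n) x : ℝ) : ℂ))
  have hφ_norm : ∀ x q, ‖φ x q‖ = ‖w q‖ := fun x q => by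
    simp [φ, Complex.norm_exp_I_mul_ofReal]
  have hw_mem : Memℓp (‖w ·‖) 2 := memℓp_gen (by simpa using hw1.summable)
  have hφ_mem : ∀ x, Memℓp (φ x) 2 := fun x => hw_mem.mono fun q => (hφ_norm x q).le
  have hφ_cont : ∀ q, Continuous fun x => φ x q := fun q => by fun_prop
  refine ⟨hφ_mem, fun x => ⟨φ x, hφ_mem x⟩, fun _ _ => rfl, fun x => ?_, ?_⟩
  · exact lp.norm_eq_one_of_hasSum (by simp) _ (by simpa [hφ_norm] using hw1)
  · exact lp.continuous_of_dominated (by simp) hw_mem (fun x q => (hφ_norm x q).le) hφ_cont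

/-- Claim E.1: the feature map `Φ(x)(q) = w(q) · exp(i⟪v_q, x⟫)`, where
`v_q = ∑_{n ∈ supp q} (q n) • b n` for a Hilbert basis `(b n)` of the separable
infinite-dimensional real Hilbert space `X` and `Q = ℕ →₀ ℚ`, maps `X`
continuously into the unit sphere of `ℓ²(Q, ℂ)`. -/
theorem stmt_10 {X : Type*} [NormedAddCommGroup X] [InnerProductSpace ℝ X] [CompleteSpace X]
    (b : HilbertBasis ℕ ℝ X)
    (w : (ℕ →₀ ℚ) → ℝ) (hw1 : HasSum (fun q => w q ^ 2) 1)
    (hw : ∀ q, 0 < w q ∧ w q < 1) :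
    (∀ x : X, Memℓp (fun q : ℕ →₀ ℚ => (w q : ℂ) *
      Complex.exp (Complex.I *
        ((inner ℝ (∑ n ∈ q.support, (q n : ℝ) • b n) x : ℝ) : ℂ))) 2) ∧
    ∃ Φ : X → lp (fun _ : ℕ →₀ ℚ => ℂ) 2,
      (∀ (x : X) (q : ℕ →₀ ℚ), Φ x q = (w q : ℂ) *
        Complex.exp (Complex.I *
          ((inner ℝ (∑ n ∈ q.support, (q n : ℝ) • b n) x : ℝ) : ℂ))) ∧
      (∀ x, ‖Φ x‖ = 1) ∧ Continuous Φ :=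
  stmt_10_general b w hw1
end

section
/- It holds that lim_{n→∞} ‖Φ(b n) − Φ(0)‖_{ℓ²(Q,ℂ)} = 0, yet the sequence of Dirac probability measures (δ_{b n})_{n ∈ ℕ} does not converge weakly to δ_0 in the topology of weak convergence of Borel probability measures on X. (The final Claim in the proof of Proposition 6.5: the maximum mean distance d_k associated to the kernel k(x,y) = ⟪Φ(x), Φ(y)⟫ satisfies d_k(δ_{b n}, δ_0) → 0 without weak convergence, so d_k does not metrize the weak topology; this shows local compactness is necessary in Theorem 55 of [SGS16].) -/
open MeasureTheory Filter Topology

/-! Since `⟪v_q, b n⟫ = q n` vanishes once `n` leaves the finite support of `q`, every coordinate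
of `Φ (b n) - Φ 0` is eventually zero, while each is bounded by `2 w(q)`; dominated convergence
in `ℓ²` gives `‖Φ (b n) - Φ 0‖ → 0`. On the other hand `x ↦ δ_x` is a topological embedding of
the (completely regular) space `X` into the probability measures, so `δ_{b n} → δ_0` would force
`b n → 0`, which is impossible as `‖b n‖ = 1`. -/

theorem lp.tendsto_norm_zero_of_dominated {α ι : Type*} {E : ι → Type*}
    [∀ i, NormedAddCommGroup (E i)] {p : ENNReal} {l : Filter α} (hp : 0 < p.toReal)
    {f : α → lp E p} {bound : ι → ℝ} (h_sum : Summable bound)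
    (h_lim : ∀ i, Tendsto (fun n => f n i) l (𝓝 0))
    (h_bound : ∀ᶠ n in l, ∀ i, ‖f n i‖ ^ p.toReal ≤ bound i) :
    Tendsto (fun n => ‖f n‖) l (𝓝 0) := by
  have h_pow : Tendsto (fun n => ‖f n‖ ^ p.toReal) l (𝓝 0) := by
    simp_rw [lp.norm_rpow_eq_tsum hp]
    have h_lim_pow (i : ι) : Tendsto (fun n => ‖f n i‖ ^ p.toReal) l (𝓝 0) := by
      simpa [Real.zero_rpow hp.ne'] using (h_lim i).norm.rpow_const (Or.inr hp.le)
    simpa using tendsto_tsum_of_dominated_convergence h_sum h_lim_pow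
      (h_bound.mono fun n hn i =>
        (Real.norm_of_nonneg (Real.rpow_nonneg (norm_nonneg _) _)).trans_le (hn i))
  have h_root := ((Real.continuousAt_rpow_const 0 p.toReal⁻¹
    (Or.inr (inv_nonneg.2 hp.le))).tendsto.comp h_pow)
  rw [Real.zero_rpow (inv_ne_zero hp.ne')] at h_root
  exact h_root.congr fun n => Real.rpow_rpow_inv (lp.norm_nonneg' _) hp.ne'

theorem Complex.norm_ofReal_mul_exp_I_mul (a t : ℝ) :
    ‖(a : ℂ) * Complex.exp (Complex.I * t)‖ = |a| := by
  rw [norm_mul, Complex.norm_real, mul_comm Complex.I, Complex.norm_exp_ofReal_mul_I, mul_one,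
    Real.norm_eq_abs]

theorem Orthonormal.inner_sum_rat_smul_left {ι X : Type*} [NormedAddCommGroup X]
    [InnerProductSpace ℝ X] {v : ι → X} (hv : Orthonormal ℝ v) (q : ι →₀ ℚ) (n : ι) :
    inner ℝ (∑ m ∈ q.support, (q m : ℝ) • v m) (v n) = q n := by
  by_cases hn : n ∈ q.support
  · simpa using hv.inner_left_sum (fun m => (q m : ℝ)) hn
  · rw [Finsupp.notMem_support_iff.1 hn, Rat.cast_zero, sum_inner]
    refine Finset.sum_eq_zero fun m hm => ?_
    rw [real_inner_smul_left, hv.inner_eq_zero (ne_of_mem_of_not_mem hm hn), mul_zero]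

section FeatureMap

variable {ι X : Type*} [NormedAddCommGroup X] [InnerProductSpace ℝ X] {v : ι → X}
  {w : (ι →₀ ℚ) → ℝ} {Φ : X → lp (fun _ : ι →₀ ℚ => ℂ) 2}

variable (v w Φ) in
def IsFourierFeatureMap : Prop :=
  ∀ (x : X) (q : ι →₀ ℚ), Φ x q = (w q : ℂ) *
    Complex.exp (Complex.I * ((inner ℝ (∑ m ∈ q.support, (q m : ℝ) • v m) x : ℝ) : ℂ))

theorem IsFourierFeatureMap.norm_apply (hΦ : IsFourierFeatureMap v w Φ) (x : X) (q : ι →₀ ℚ) :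
    ‖Φ x q‖ = |w q| := by
  rw [hΦ, Complex.norm_ofReal_mul_exp_I_mul]

theorem IsFourierFeatureMap.apply_eq_apply_zero (hΦ : IsFourierFeatureMap v w Φ)
    (hv : Orthonormal ℝ v) {q : ι →₀ ℚ} {n : ι} (hqn : q n = 0) : Φ (v n) q = Φ 0 q := by
  rw [hΦ, hΦ, hv.inner_sum_rat_smul_left, hqn, inner_zero_right, Rat.cast_zero]

theorem IsFourierFeatureMap.tendsto_norm_sub_zero (hΦ : IsFourierFeatureMap v w Φ)
    (hv : Orthonormal ℝ v) (hw : Summable fun q => w q ^ 2) :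
    Tendsto (fun n => ‖Φ (v n) - Φ 0‖) cofinite (𝓝 0) := by
  refine lp.tendsto_norm_zero_of_dominated (by norm_num) (hw.mul_left 4) (fun q => ?_)
    (Eventually.of_forall fun n q => ?_)
  · refine tendsto_const_nhds.congr' ?_
    filter_upwards [q.support.eventually_cofinite_notMem] with n hn
    rw [lp.coeFn_sub, Pi.sub_apply,
      hΦ.apply_eq_apply_zero hv (Finsupp.notMem_support_iff.1 hn), sub_self]
  · have h_le : ‖(Φ (v n) - Φ 0) q‖ ≤ 2 * |w q| :=
      calc ‖(Φ (v n) - Φ 0) q‖ ≤ ‖Φ (v n) q‖ + ‖Φ 0 q‖ := norm_sub_le _ _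
        _ = 2 * |w q| := by rw [hΦ.norm_apply, hΦ.norm_apply, two_mul]
    calc ‖(Φ (v n) - Φ 0) q‖ ^ (2 : ENNReal).toReal = ‖(Φ (v n) - Φ 0) q‖ ^ 2 := by
          norm_num
      _ ≤ (2 * |w q|) ^ 2 := pow_le_pow_left₀ (norm_nonneg _) h_le 2
      _ = 4 * w q ^ 2 := by rw [mul_pow, sq_abs]; norm_num

end FeatureMap

theorem not_tendsto_diracProba_zero_of_norm_eq_one {α X : Type*} [NormedAddCommGroup X]
    [MeasurableSpace X] [OpensMeasurableSpace X] {l : Filter α} [l.NeBot] {x : α → X}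
    (hx : ∀ n, ‖x n‖ = 1) : ¬ Tendsto (fun n => diracProba (x n)) l (𝓝 (diracProba 0)) := by
  intro h
  have hx0 : Tendsto x l (𝓝 0) :=
    (tendsto_diracProba_iff_tendsto (map x l)).1 (tendsto_map'_iff.2 h)
  have h_norm := hx0.norm
  simp only [hx, norm_zero] at h_norm
  exact one_ne_zero (tendsto_nhds_unique tendsto_const_nhds h_norm)

theorem stmt_13_general {X : Type*} [NormedAddCommGroup X] [InnerProductSpace ℝ X]
    [MeasurableSpace X] [BorelSpace X]
    (b : HilbertBasis ℕ ℝ X)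
    (w : (ℕ →₀ ℚ) → ℝ) (hw1 : HasSum (fun q => w q ^ 2) 1)
    (Φ : X → lp (fun _ : ℕ →₀ ℚ => ℂ) 2)
    (hΦ : ∀ (x : X) (q : ℕ →₀ ℚ), Φ x q = (w q : ℂ) *
      Complex.exp (Complex.I *
        ((inner ℝ (∑ n ∈ q.support, (q n : ℝ) • b n) x : ℝ) : ℂ))) :
    Filter.Tendsto (fun n : ℕ => ‖Φ (b n) - Φ 0‖) Filter.atTop (nhds 0) ∧
    ¬ Filter.Tendsto
        (fun n : ℕ => (⟨Measure.dirac (b n), inferInstance⟩ : ProbabilityMeasure X))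
        Filter.atTop
        (@nhds (ProbabilityMeasure X) _ (⟨Measure.dirac 0, inferInstance⟩ : ProbabilityMeasure X)) := by
  refine ⟨?_, not_tendsto_diracProba_zero_of_norm_eq_one b.orthonormal.1⟩
  rw [← Nat.cofinite_eq_atTop]
  exact IsFourierFeatureMap.tendsto_norm_sub_zero hΦ b.orthonormal hw1.summable

/-- Final claim in the proof of Proposition 6.5: `‖Φ(b n) − Φ(0)‖ → 0`
(so the MMD of the Dirac measures `δ_{b n}` and `δ_0` tends to `0`), yet
`δ_{b n}` does not converge weakly to `δ_0`; hence the MMD of the kernel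
`k(x,y) = ⟪Φ(x), Φ(y)⟫` does not metrize the weak topology. -/
theorem stmt_13 {X : Type*} [NormedAddCommGroup X] [InnerProductSpace ℝ X] [CompleteSpace X]
    [MeasurableSpace X] [BorelSpace X]
    (b : HilbertBasis ℕ ℝ X)
    (w : (ℕ →₀ ℚ) → ℝ) (hw1 : HasSum (fun q => w q ^ 2) 1)
    (hw : ∀ q, 0 < w q ∧ w q < 1)
    (Φ : X → lp (fun _ : ℕ →₀ ℚ => ℂ) 2)
    (hΦ : ∀ (x : X) (q : ℕ →₀ ℚ), Φ x q = (w q : ℂ) *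
      Complex.exp (Complex.I *
        ((inner ℝ (∑ n ∈ q.support, (q n : ℝ) • b n) x : ℝ) : ℂ))) :
    Filter.Tendsto (fun n : ℕ => ‖Φ (b n) - Φ 0‖) Filter.atTop (nhds 0) ∧
    ¬ Filter.Tendsto
        (fun n : ℕ => (⟨Measure.dirac (b n), inferInstance⟩ : ProbabilityMeasure X))
        Filter.atTop
        (@nhds (ProbabilityMeasure X) _ (⟨Measure.dirac 0, inferInstance⟩ : ProbabilityMeasure X)) :=
  stmt_13_general b w hw1 Φ hΦ
end

section
/- Let Y be a metrizable topological space with its Borel σ-algebra, let (E m)_{m ∈ ℕ} be a family of finite-dimensional real inner product spaces, and let Φ : Y → lp E 2 be a continuous map with ‖Φ(y)‖ ≤ C for all y ∈ Y. If (μ_n)_{n ∈ ℕ} and μ are Borel probability measures on Y such that μ_n → μ in the topology of weak convergence, then the Bochner integrals converge: ‖∫ Φ dμ_n − ∫ Φ dμ‖ → 0 as n → ∞. (The content of Proposition D.1(2)/Theorem 6.6(4): when every level of the feature space is finite-dimensional, weak convergence of probability measures implies convergence of the kernel mean embeddings, i.e. convergence in the MMD d_k for k(x,y) = ⟪Φ(x),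 Φ(y)⟫.) -/
/-!
Each coordinate `y ↦ Φ y m` is a bounded continuous function into the finite-dimensional space
`E m`, so its integrals converge under weak convergence, and hence so do the integrals of the
truncations `P_M ∘ Φ`, where `P_M` keeps the first `M` coordinates. The truncation error
`y ↦ ‖P_M (Φ y) - Φ y‖` is a bounded continuous real function, so its `μ_n`-integrals converge to
its `μ`-integral, which is small for large `M` by dominated convergence; an ε/3 argument
concludes. Finite-dimensionality of the `E m` also makes `lp E 2` separable, which is what makes
the Bochner integrals of `Φ` meaningful.
-/

open MeasureTheory Filter Topology TopologicalSpace
open scoped ENNReal BoundedContinuousFunction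

namespace lp

variable {p : ℝ≥0∞} [Fact (1 ≤ p)]

theorem separableSpace {α : Type*} [Countable α] {E : α → Type*}
    [∀ i, NormedAddCommGroup (E i)] [∀ i, SeparableSpace (E i)] (hp : p ≠ ∞) :
    SeparableSpace (lp E p) := by
  classical
  rw [← isSeparable_univ_iff]
  have hsingle : IsSeparable (⋃ i, Set.range (lp.single (E := E) p i)) :=
    .iUnion fun i ↦ isSeparable_range (isometry_single i).continuous
  refine hsingle.span (R := ℕ) |>.closure.mono fun f _ ↦ ?_
  refine mem_closure_of_tendsto (lp.hasSum_single hp f) (Eventually.of_forall fun s ↦ ?_)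
  exact Submodule.sum_mem _ fun i _ ↦ Submodule.subset_span (Set.mem_iUnion.2 ⟨i, _, rfl⟩)

variable {E : ℕ → Type*} [∀ i, NormedAddCommGroup (E i)] [∀ i, NormedSpace ℝ (E i)]

variable (p) in
noncomputable def truncation (M : ℕ) : lp E p →L[ℝ] lp E p :=
  ∑ i ∈ Finset.range M, singleContinuousLinearMap ℝ E p i ∘L evalCLM ℝ E p i

theorem truncation_apply (M : ℕ) (f : lp E p) :
    truncation p M f = ∑ i ∈ Finset.range M, lp.single p i (f i) := by
  simp [truncation, evalCLM]

theorem tendsto_truncation (hp : p ≠ ∞) (f : lp E p) :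
    Tendsto (fun M ↦ truncation p M f) atTop (𝓝 f) := by
  simpa only [truncation_apply] using (lp.hasSum_single hp f).tendsto_sum_nat

theorem tendsto_truncation_of_tendsto_apply {ι : Type*} {L : Filter ι} {f : ι → lp E p}
    {g : lp E p} (h : ∀ i, Tendsto (fun n ↦ f n i) L (𝓝 (g i))) (M : ℕ) :
    Tendsto (fun n ↦ truncation p M (f n)) L (𝓝 (truncation p M g)) := by
  simp only [truncation_apply]
  exact tendsto_finsetSum _ fun i _ ↦ ((isometry_single i).continuous.tendsto _).comp (h i)

theorem integral_apply {Y : Type*} [MeasurableSpace Y] {ν : Measure Y} [∀ i, CompleteSpace (E i)]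
    {F : Y → lp E p} (hF : Integrable F ν) (i : ℕ) :
    (∫ y, F y ∂ν) i = ∫ y, F y i ∂ν :=
  ((evalCLM ℝ E p i).integral_comp_comm hF).symm

end lp

namespace MeasureTheory

variable {Y : Type*} [TopologicalSpace Y] [MeasurableSpace Y] [OpensMeasurableSpace Y]
  {V : Type*} [NormedAddCommGroup V] [NormedSpace ℝ V]

theorem norm_map_integral_sub_integral_le [CompleteSpace V] [SecondCountableTopology V]
    (ν : Measure Y) [IsFiniteMeasure ν] (F : Y →ᵇ V) (P : V →L[ℝ] V) :
    ‖P (∫ y, F y ∂ν) - ∫ y, F y ∂ν‖ ≤ ∫ y, ‖P (F y) - F y‖ ∂ν := by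
  borelize V
  rw [← P.integral_comp_comm (F.integrable ν), ← integral_sub (P.integrable_comp (F.integrable ν))
    (F.integrable ν)]
  exact norm_integral_le_integral_norm _

theorem tendsto_integral_norm_map_sub_of_tendsto (ν : Measure Y) [IsFiniteMeasure ν]
    (F : Y →ᵇ V) {P : ℕ → V →L[ℝ] V} {K : ℝ} (hK : ∀ M, ‖P M‖ ≤ K)
    (hP : ∀ v, Tendsto (fun M ↦ P M v) atTop (𝓝 v)) :
    Tendsto (fun M ↦ ∫ y, ‖P M (F y) - F y‖ ∂ν) atTop (𝓝 0) := by
  have hK0 : 0 ≤ K := (norm_nonneg _).trans (hK 0)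
  have hbound : ∀ M y, ‖P M (F y) - F y‖ ≤ (K + 1) * ‖F‖ := fun M y ↦
    calc ‖P M (F y) - F y‖ ≤ K * ‖F y‖ + ‖F y‖ := by
          grw [norm_sub_le, (P M).le_of_opNorm_le (hK M)]
      _ = (K + 1) * ‖F y‖ := by ring
      _ ≤ (K + 1) * ‖F‖ := by grw [F.norm_coe_le_norm y]
  simpa using tendsto_integral_of_dominated_convergence (fun _ ↦ (K + 1) * ‖F‖)
    (fun M ↦ (by fun_prop : Continuous fun y ↦ ‖P M (F y) - F y‖).aestronglyMeasurable)
    (integrable_const _) (fun M ↦ ae_of_all _ fun y ↦ by simpa using hbound M y)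
    (ae_of_all _ fun y ↦ tendsto_iff_norm_sub_tendsto_zero.1 (hP (F y)))

namespace ProbabilityMeasure

variable {ι : Type*} {L : Filter ι} {μs : ι → ProbabilityMeasure Y} {μ : ProbabilityMeasure Y}

theorem tendsto_integral_of_finiteDimensional [FiniteDimensional ℝ V]
    (h : Tendsto μs L (𝓝 μ)) (F : Y →ᵇ V) :
    Tendsto (fun n ↦ ∫ y, F y ∂(μs n : Measure Y)) L (𝓝 (∫ y, F y ∂(μ : Measure Y))) := by
  borelize V
  let e := (Module.finBasis ℝ V).equivFunL
  let coord i : V →L[ℝ] ℝ := ContinuousLinearMap.proj i ∘L e.toContinuousLinearMap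
  have he : ∀ (ν : ProbabilityMeasure Y) i,
      e (∫ y, F y ∂(ν : Measure Y)) i = ∫ y, coord i (F y) ∂(ν : Measure Y) :=
    fun ν i ↦ ((coord i).integral_comp_comm (F.integrable _)).symm
  suffices Tendsto (fun n ↦ e (∫ y, F y ∂(μs n : Measure Y))) L
      (𝓝 (e (∫ y, F y ∂(μ : Measure Y)))) by
    simpa [Function.comp_def] using (e.symm.continuous.tendsto _).comp this
  refine tendsto_pi_nhds.2 fun i ↦ ?_
  simp only [he]
  exact tendsto_iff_forall_integral_tendsto.1 h (F.comp _ (ContinuousLinearMap.lipschitz _))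

theorem tendsto_integral_of_tendsto_map_integral [CompleteSpace V] [SecondCountableTopology V]
    (h : Tendsto μs L (𝓝 μ)) (F : Y →ᵇ V) {P : ℕ → V →L[ℝ] V}
    (hP : ∀ v, Tendsto (fun M ↦ P M v) atTop (𝓝 v))
    (hPF : ∀ M, Tendsto (fun n ↦ P M (∫ y, F y ∂(μs n : Measure Y))) L
      (𝓝 (P M (∫ y, F y ∂(μ : Measure Y))))) :
    Tendsto (fun n ↦ ∫ y, F y ∂(μs n : Measure Y)) L (𝓝 (∫ y, F y ∂(μ : Measure Y))) := by
  obtain ⟨K, hK⟩ : ∃ K, ∀ M, ‖P M‖ ≤ K := banach_steinhaus fun v ↦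
    isBounded_iff_forall_norm_le.1 (Metric.isBounded_range_of_tendsto _ (hP v)) |>.imp
      fun _ hC M ↦ hC _ ⟨M, rfl⟩
  rw [tendsto_iff_norm_sub_tendsto_zero, Metric.tendsto_nhds]
  intro ε hε
  obtain ⟨M, hM⟩ := ((tendsto_integral_norm_map_sub_of_tendsto (μ : Measure Y) F hK hP).eventually
    (gt_mem_nhds (half_pos hε))).exists
  let T : Y →ᵇ ℝ := (F.comp _ (P M).lipschitz - F).normComp
  have hT := tendsto_iff_forall_integral_tendsto.1 h T
  have hT_eq : ∀ ν : Measure Y, ∫ y, T y ∂ν = ∫ y, ‖P M (F y) - F y‖ ∂ν := fun _ ↦ rfl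
  have hlim := (hT.add (tendsto_iff_norm_sub_tendsto_zero.1 (hPF M))).add_const
    (∫ y, T y ∂(μ : Measure Y))
  simp only [hT_eq, add_zero] at hlim
  filter_upwards [hlim.eventually_lt_const (show _ < ε by linarith)] with n hn
  rw [dist_zero_right, norm_norm, ← dist_eq_norm]
  refine (dist_triangle4 _ (P M (∫ y, F y ∂(μs n : Measure Y))) (P M (∫ y, F y ∂(μ : Measure Y)))
    _).trans_lt (lt_of_le_of_lt ?_ hn)
  simp only [dist_eq_norm, norm_sub_rev (∫ y, F y ∂(μs n : Measure Y))]
  gcongr <;> exact norm_map_integral_sub_integral_le _ F (P M)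

end ProbabilityMeasure

end MeasureTheory

theorem stmt_15_general {Y : Type*} [TopologicalSpace Y]
    [MeasurableSpace Y] [BorelSpace Y]
    {E : ℕ → Type*} [∀ m, NormedAddCommGroup (E m)] [∀ m, InnerProductSpace ℝ (E m)]
    [∀ m, FiniteDimensional ℝ (E m)]
    (Φ : Y → lp E 2) (hΦcont : Continuous Φ)
    (C : ℝ) (hΦbdd : ∀ y, ‖Φ y‖ ≤ C)
    (μs : ℕ → ProbabilityMeasure Y) (μ : ProbabilityMeasure Y)
    (hconv : Filter.Tendsto μs Filter.atTop (nhds μ)) :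
    Filter.Tendsto
      (fun n => ‖(∫ y, Φ y ∂(μs n : Measure Y)) - ∫ y, Φ y ∂(μ : Measure Y)‖)
      Filter.atTop (nhds 0) := by
  have : SeparableSpace (lp E 2) := lp.separableSpace ENNReal.ofNat_ne_top
  have : SecondCountableTopology (lp E 2) := UniformSpace.secondCountable_of_separable _
  borelize ↥(lp E 2)
  let F : Y →ᵇ lp E 2 := .ofNormedAddCommGroup Φ hΦcont C hΦbdd
  refine tendsto_iff_norm_sub_tendsto_zero.1 <|
    ProbabilityMeasure.tendsto_integral_of_tendsto_map_integral hconv F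
      (lp.tendsto_truncation ENNReal.ofNat_ne_top) fun M ↦
      lp.tendsto_truncation_of_tendsto_apply (fun m ↦ ?_) M
  simp only [lp.integral_apply (F.integrable _)]
  exact ProbabilityMeasure.tendsto_integral_of_finiteDimensional hconv
    (F.comp _ (lp.evalCLM ℝ E 2 m).lipschitz)

/-- Proposition D.1(2) / Theorem 6.6(4): if every level `E m` of the feature
space `lp E 2` is finite-dimensional and `Φ : Y → lp E 2` is a continuous
bounded feature map on a metrizable space `Y`, then weak convergence of Borel
probability measures `μ_n → μ` implies convergence of the kernel mean
embeddings `∫ Φ dμ_n → ∫ Φ dμ`, i.e. convergence in the MMD. -/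
theorem stmt_15 {Y : Type*} [TopologicalSpace Y] [TopologicalSpace.MetrizableSpace Y]
    [MeasurableSpace Y] [BorelSpace Y]
    {E : ℕ → Type*} [∀ m, NormedAddCommGroup (E m)] [∀ m, InnerProductSpace ℝ (E m)]
    [∀ m, FiniteDimensional ℝ (E m)]
    (Φ : Y → lp E 2) (hΦcont : Continuous Φ)
    (C : ℝ) (hΦbdd : ∀ y, ‖Φ y‖ ≤ C)
    (μs : ℕ → ProbabilityMeasure Y) (μ : ProbabilityMeasure Y)
    (hconv : Filter.Tendsto μs Filter.atTop (nhds μ)) :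
    Filter.Tendsto
      (fun n => ‖(∫ y, Φ y ∂(μs n : Measure Y)) - ∫ y, Φ y ∂(μ : Measure Y)‖)
      Filter.atTop (nhds 0) :=
  stmt_15_general Φ hΦcont C hΦbdd μs μ hconv
end
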